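/- arXiv:math/0409449 — 7 statements merged into one kernel-verified Lean document; each statement's English description precedes it below -/
import Mathlib

section
/- Let M be a transitive permutation group on a finite set Ω with an M-normal Cartesian decomposition E = {Γ₁, ..., Γ_ℓ}. For γ ∈ Γᵢ and ω ∈ γ, the stabiliser of the block γ in M^{Γᵢ} equals M_ω ∩ M^{Γᵢ}. -/
/-! A point of `Ω` is determined by the blocks containing it. An element of `N i` fixes every
block of `Γ j` for `j ≠ i`, as `N i` lies in the kernel of `M` on `Γ j`; if it also fixes `γ`,
it fixes every block through `ω`, hence `ω`. Conversely, an element of `M` fixing `ω` maps `γ`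
to a block of `Γ i` through `ω`, which can only be `γ`. -/

open scoped Pointwise

namespace QP

variable {Ω : Type*}

/-- `P` is a partition of `Ω`. -/
def IsPartition (P : Set (Set Ω)) : Prop :=
  ∅ ∉ P ∧ ∀ ω : Ω, ∃! b : Set Ω, b ∈ P ∧ ω ∈ b

/-- A proper partition: neither `{Ω}` nor the partition into singletons. -/
def IsProperPartition (P : Set (Set Ω)) : Prop :=
  IsPartition P ∧ P ≠ {Set.univ} ∧ ¬ ∀ b ∈ P, ∃ ω : Ω, b = {ω}

/-- The pointwise stabiliser of the partition `P` (kernel of the action on `P`),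
as a subgroup of `Sym(Ω)`: the permutations fixing every block of `P` setwise. -/
def partKernel (P : Set (Set Ω)) : Subgroup (Equiv.Perm Ω) where
  carrier := {g | ∀ b ∈ P, g • b = b}
  one_mem' := by intro b hb; simp
  mul_mem' := by
    intro g h hg hh b hb
    rw [mul_smul, hh b hb, hg b hb]
  inv_mem' := by
    intro g hg b hb
    rw [inv_smul_eq_iff, hg b hb]

/-- The setwise stabiliser of a partition `P` in `Sym(Ω)`. -/
def partStab (P : Set (Set Ω)) : Subgroup (Equiv.Perm Ω) :=
  MulAction.stabilizer (Equiv.Perm Ω) P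

/-- The permutation of the set of blocks of `P` induced by an element of
the stabiliser of `P`. -/
noncomputable def blockPerm (P : Set (Set Ω)) (g : ↥(partStab P)) : Equiv.Perm ↥P where
  toFun b := ⟨(g : Equiv.Perm Ω) • (b : Set Ω), by
    have h1 : (g : Equiv.Perm Ω) • (b : Set Ω) ∈ (g : Equiv.Perm Ω) • P :=
      Set.smul_mem_smul_set b.2
    rwa [g.2] at h1⟩
  invFun b := ⟨(g : Equiv.Perm Ω)⁻¹ • (b : Set Ω), by
    have h0 : (g : Equiv.Perm Ω) • P = P := g.2
    have h2 : ((g : Equiv.Perm Ω)⁻¹) • P = P := by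
      rw [inv_smul_eq_iff, h0]
    have h1 : (g : Equiv.Perm Ω)⁻¹ • (b : Set Ω) ∈ (g : Equiv.Perm Ω)⁻¹ • P :=
      Set.smul_mem_smul_set b.2
    rwa [h2] at h1⟩
  left_inv b := by
    apply Subtype.ext
    simp
  right_inv b := by
    apply Subtype.ext
    simp

/-- The homomorphism from the stabiliser of a partition `P` to the symmetric
group on the set of blocks of `P`. -/
noncomputable def componentHom (P : Set (Set Ω)) : ↥(partStab P) →* Equiv.Perm ↥P where
  toFun := blockPerm P
  map_one' := by
    apply Equiv.ext; intro b
    apply Subtype.ext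
    simp [blockPerm]
  map_mul' := by
    intro g h
    apply Equiv.ext; intro b
    apply Subtype.ext
    simp [blockPerm, mul_smul]

/-- The component `G^P` of `G` on a partition `P` : the permutation group
induced on the set of blocks of `P` by the setwise stabiliser of `P` in `G`. -/
noncomputable def component (G : Subgroup (Equiv.Perm Ω)) (P : Set (Set Ω)) :
    Subgroup (Equiv.Perm ↥P) :=
  Subgroup.map (componentHom P) (G.subgroupOf (partStab P))

section abstr
variable {X : Type*} [Group X]

/-- `N` is a normal subgroup of the (sub)group `G`. -/
def IsNormalIn (N G : Subgroup X) : Prop :=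
  N ≤ G ∧ ∀ g ∈ G, ∀ n ∈ N, g * n * g⁻¹ ∈ N

/-- `N` is a minimal normal subgroup of `G`. -/
def IsMinimalNormalIn (N G : Subgroup X) : Prop :=
  IsNormalIn N G ∧ N ≠ ⊥ ∧
    ∀ K : Subgroup X, IsNormalIn K G → K ≠ ⊥ → K ≤ N → K = N

/-- The socle of `G`: the subgroup generated by all minimal normal subgroups. -/
def socle (G : Subgroup X) : Subgroup X :=
  ⨆ N ∈ {N : Subgroup X | IsMinimalNormalIn N G}, N

/-- `M` is the internal direct product of the family `N` of subgroups. -/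
def IsInternalDirectProductOver {ι : Type*} (M : Subgroup X) (N : ι → Subgroup X) : Prop :=
  (∀ i, N i ≤ M) ∧
  (∀ i j, i ≠ j → ∀ x ∈ N i, ∀ y ∈ N j, Commute x y) ∧
  (⨆ i, N i) = M ∧
  (∀ i, N i ⊓ (⨆ j ∈ ({i}ᶜ : Set ι), N j) = ⊥)

end abstr

/-- A transitive permutation group on `α`. -/
def IsTransitivePerm {α : Type*} (H : Subgroup (Equiv.Perm α)) : Prop :=
  ∀ a b : α, ∃ g ∈ H, g a = b

/-- A regular permutation group: transitive with trivial point stabilisers. -/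
def IsRegularPerm {α : Type*} (H : Subgroup (Equiv.Perm α)) : Prop :=
  IsTransitivePerm H ∧ ∀ g ∈ H, ∀ a : α, g a = a → g = 1

/-- A semiregular permutation group: all point stabilisers are trivial. -/
def IsSemiregularPerm {α : Type*} (H : Subgroup (Equiv.Perm α)) : Prop :=
  ∀ g ∈ H, ∀ a : α, g a = a → g = 1

/-- A quasiprimitive permutation group: transitive, and every nontrivial
normal subgroup is transitive. -/
def IsQuasiprimitivePerm {α : Type*} (H : Subgroup (Equiv.Perm α)) : Prop :=
  IsTransitivePerm H ∧
    ∀ N : Subgroup (Equiv.Perm α), IsNormalIn N H → N ≠ ⊥ → IsTransitivePerm N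

section indexed

variable {ι : Type*}

/-- A Cartesian decomposition, indexed form: a family of pairwise distinct
proper partitions such that any choice of blocks, one from each partition,
intersects in exactly one point. -/
def IsCartesianDecomp (Γ : ι → Set (Set Ω)) : Prop :=
  (∀ i, IsProperPartition (Γ i)) ∧ Function.Injective Γ ∧
  ∀ c : ι → Set Ω, (∀ i, c i ∈ Γ i) → ∃! ω : Ω, ∀ i, ω ∈ c i

/-- The Cartesian decomposition `Γ` is `M`-normal, with `N i` playing the
role of `M^{Γ i}`: each partition is `M`-invariant, `M` is the internal direct
product of the `N i`, each `N i` acts faithfully on `Γ i`, and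
`∏_{j ≠ i} N j` is the kernel of the `M`-action on `Γ i`. -/
structure IsNormalDecomp (M : Subgroup (Equiv.Perm Ω)) (Γ : ι → Set (Set Ω))
    (N : ι → Subgroup (Equiv.Perm Ω)) : Prop where
  invariant : ∀ i, ∀ g ∈ M, ∀ b ∈ Γ i, g • b ∈ Γ i
  product : IsInternalDirectProductOver M N
  faithful : ∀ i, N i ⊓ partKernel (Γ i) = ⊥
  kernel : ∀ i, M ⊓ partKernel (Γ i) = ⨆ j ∈ ({i}ᶜ : Set ι), N j

end indexed

section setbased

/-- A Cartesian decomposition, as a (finite) set of proper partitions. -/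
def IsCartesianDecompSet (E : Set (Set (Set Ω))) : Prop :=
  E.Finite ∧ (∀ P ∈ E, IsProperPartition P) ∧
  ∀ c : Set (Set Ω) → Set Ω, (∀ P ∈ E, c P ∈ P) → ∃! ω : Ω, ∀ P ∈ E, ω ∈ c P

/-- `E` is a homogeneous Cartesian decomposition: all partitions have the same size. -/
def IsHomogeneous (E : Set (Set (Set Ω))) : Prop :=
  ∀ P ∈ E, ∀ Q ∈ E, Nat.card ↥P = Nat.card ↥Q

/-- `E` is invariant under `G`: `G` permutes the partitions in `E`. -/
def InvariantDec (G : Subgroup (Equiv.Perm Ω)) (E : Set (Set (Set Ω))) : Prop :=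
  ∀ g ∈ G, ∀ P ∈ E, g • P ∈ E

/-- `G` is transitive on `E`. -/
def TransitiveOnDec (G : Subgroup (Equiv.Perm Ω)) (E : Set (Set (Set Ω))) : Prop :=
  ∀ P ∈ E, ∀ Q ∈ E, ∃ g ∈ G, g • P = Q

/-- The Cartesian decomposition `E` is `M`-normal: `M` fixes each partition
in `E` setwise, and `M` is the internal direct product of subgroups `N P`
(`P ∈ E`), where `∏_{Q ≠ P} N Q` is the kernel of the `M`-action on `P`. -/
def IsNormalDecompSet (M : Subgroup (Equiv.Perm Ω)) (E : Set (Set (Set Ω))) : Prop :=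
  (∀ g ∈ M, ∀ P ∈ E, g • P = P) ∧
  ∃ N : Set (Set Ω) → Subgroup (Equiv.Perm Ω),
    (∀ P ∈ E, N P ≤ M) ∧
    (∀ P Q, P ∈ E → Q ∈ E → P ≠ Q → ∀ x ∈ N P, ∀ y ∈ N Q, Commute x y) ∧
    (⨆ P ∈ E, N P) = M ∧
    (∀ P ∈ E, N P ⊓ (⨆ Q ∈ E \ {P}, N Q) = ⊥) ∧
    (∀ P ∈ E, M ⊓ partKernel P = ⨆ Q ∈ E \ {P}, N Q)

/-- `E` is a blow-up decomposition for `G`: a `G`-invariant Cartesian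
decomposition on which `G` acts transitively, which is `M`-normal for some
transitive normal subgroup `M` of `G` such that `M^Γ = Soc(G^Γ)` for every
`Γ ∈ E`. -/
def IsBlowUpDecomp (G : Subgroup (Equiv.Perm Ω)) (E : Set (Set (Set Ω))) : Prop :=
  IsCartesianDecompSet E ∧ InvariantDec G E ∧ TransitiveOnDec G E ∧
  ∃ M : Subgroup (Equiv.Perm Ω), IsNormalIn M G ∧ IsTransitivePerm M ∧
    IsNormalDecompSet M E ∧ ∀ P ∈ E, component M P = socle (component G P)

end setbased


theorem IsPartition.eq_of_mem {P : Set (Set Ω)} (hP : IsPartition P) {b c : Set Ω} {ω : Ω}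
    (hb : b ∈ P) (hc : c ∈ P) (hωb : ω ∈ b) (hωc : ω ∈ c) : b = c :=
  (hP.2 ω).unique ⟨hb, hωb⟩ ⟨hc, hωc⟩

theorem IsPartition.smul_eq_self_of_fixes_mem {G : Type*} [SMul G Ω] {P : Set (Set Ω)}
    (hP : IsPartition P) {g : G} {b : Set Ω} {ω : Ω} (hgb : g • b ∈ P) (hb : b ∈ P)
    (hω : ω ∈ b) (hgω : g • ω = ω) : g • b = b :=
  hP.eq_of_mem hgb hb (hgω ▸ Set.smul_mem_smul_set hω) hω

section indexed

variable {ι : Type*} {Γ : ι → Set (Set Ω)}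

theorem IsCartesianDecomp.eq_of_forall_mem_same_block (hcart : IsCartesianDecomp Γ)
    {ω ω' : Ω} (h : ∀ j, ∃ b ∈ Γ j, ω ∈ b ∧ ω' ∈ b) : ω = ω' := by
  choose b hb hωb hω'b using h
  exact (hcart.2.2 b hb).unique hωb hω'b

theorem IsCartesianDecomp.smul_eq_self_of_forall_smul_block_eq
    {G : Type*} [SMul G Ω] (hcart : IsCartesianDecomp Γ) {g : G} {ω : Ω}
    (h : ∀ j, ∀ b ∈ Γ j, ω ∈ b → g • b = b) : g • ω = ω := by
  refine (hcart.eq_of_forall_mem_same_block fun j => ?_).symm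
  obtain ⟨b, hb, hωb⟩ := ((hcart.1 j).1.2 ω).exists
  exact ⟨b, hb, hωb, h j b hb hωb ▸ Set.smul_mem_smul_set hωb⟩

theorem IsNormalDecomp.le_partKernel {M : Subgroup (Equiv.Perm Ω)}
    {N : ι → Subgroup (Equiv.Perm Ω)} (hnorm : IsNormalDecomp M Γ N) {i j : ι} (hij : i ≠ j) :
    N i ≤ partKernel (Γ j) := by
  have hle : N i ≤ ⨆ k ∈ ({j}ᶜ : Set ι), N k := le_iSup₂_of_le i hij le_rfl
  rw [← hnorm.kernel j] at hle
  exact hle.trans inf_le_right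

end indexed

end QP

theorem block_stabilizer_eq_point_stabilizer_inter_general {Ω ι : Type*}
    (M : Subgroup (Equiv.Perm Ω)) (Γ : ι → Set (Set Ω))
    (N : ι → Subgroup (Equiv.Perm Ω))
    (hcart : QP.IsCartesianDecomp Γ)
    (hnorm : QP.IsNormalDecomp M Γ N) :
    ∀ i : ι, ∀ γ ∈ Γ i, ∀ ω ∈ γ,
      N i ⊓ MulAction.stabilizer (Equiv.Perm Ω) γ =
        (M ⊓ MulAction.stabilizer (Equiv.Perm Ω) ω) ⊓ N i := by
  intro i γ hγ ω hω
  ext g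
  simp only [Subgroup.mem_inf, MulAction.mem_stabilizer_iff]
  constructor
  · rintro ⟨hgN, hgγ⟩
    refine ⟨⟨hnorm.product.1 i hgN, hcart.smul_eq_self_of_forall_smul_block_eq ?_⟩, hgN⟩
    intro j b hb hωb
    rcases eq_or_ne j i with rfl | hji
    · rwa [(hcart.1 j).1.eq_of_mem hb hγ hωb hω]
    · exact hnorm.le_partKernel hji.symm hgN b hb
  · rintro ⟨⟨hgM, hgω⟩, hgN⟩
    exact ⟨hgN, (hcart.1 i).1.smul_eq_self_of_fixes_mem
      (hnorm.invariant i g hgM γ hγ) hγ hω hgω⟩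

/-- For an M-normal Cartesian decomposition, γ ∈ Γᵢ and ω ∈ γ, the
stabiliser of the block γ in M^{Γᵢ} equals M_ω ∩ M^{Γᵢ}. -/
theorem block_stabilizer_eq_point_stabilizer_inter {Ω ι : Type*} [Finite Ω] [Finite ι]
    (M : Subgroup (Equiv.Perm Ω)) (Γ : ι → Set (Set Ω))
    (N : ι → Subgroup (Equiv.Perm Ω))
    (hMtrans : QP.IsTransitivePerm M)
    (hcart : QP.IsCartesianDecomp Γ)
    (hnorm : QP.IsNormalDecomp M Γ N) :
    ∀ i : ι, ∀ γ ∈ Γ i, ∀ ω ∈ γ,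
      N i ⊓ MulAction.stabilizer (Equiv.Perm Ω) γ =
        (M ⊓ MulAction.stabilizer (Equiv.Perm Ω) ω) ⊓ N i :=
  block_stabilizer_eq_point_stabilizer_inter_general M Γ N hcart hnorm
end

section
/- Let M be a transitive permutation group on a finite set Ω with an M-normal Cartesian decomposition E = {Γ₁, ..., Γ_ℓ}. Then for every ω ∈ Ω, the point stabiliser decomposes as M_ω = (M_ω ∩ M^{Γ₁}) × ⋯ × (M_ω ∩ M^{Γ_ℓ}). -/
open scoped Pointwise

/-- For an M-normal Cartesian decomposition, every point stabiliser
decomposes as M_ω = (M_ω ∩ M^{Γ₁}) × ⋯ × (M_ω ∩ M^{Γ_ℓ}). -/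
theorem point_stabilizer_direct_product {Ω ι : Type*} [Finite Ω] [Finite ι]
    (M : Subgroup (Equiv.Perm Ω)) (Γ : ι → Set (Set Ω))
    (N : ι → Subgroup (Equiv.Perm Ω))
    (hMtrans : QP.IsTransitivePerm M)
    (hcart : QP.IsCartesianDecomp Γ)
    (hnorm : QP.IsNormalDecomp M Γ N) :
    ∀ ω : Ω,
      QP.IsInternalDirectProductOver (M ⊓ MulAction.stabilizer (Equiv.Perm Ω) ω)
        (fun i => (M ⊓ MulAction.stabilizer (Equiv.Perm Ω) ω) ⊓ N i) := by
  classical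
  have : Fintype ι := Fintype.ofFinite ι
  obtain ⟨hle, hcomm, hsup, hdisj⟩ := hnorm.product
  -- N i is contained in the kernel of the action on Γ j for i ≠ j
  have hNk : ∀ i j : ι, i ≠ j → N i ≤ QP.partKernel (Γ j) := by
    intro i j hij
    have h1 : N i ≤ ⨆ k ∈ ({j}ᶜ : Set ι), N k := le_iSup₂ (f := fun k _ => N k) i hij
    exact h1.trans (le_of_eq (hnorm.kernel j).symm) |>.trans inf_le_right
  intro ω
  -- blocks containing ω
  choose b hb using fun i => ((hcart.1 i).1.2 ω).exists
  -- elements of M fixing ω fix each block b i setwise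
  have hfix : ∀ g ∈ M, g ω = ω → ∀ i, g • b i = b i := by
    intro g hg hgω i
    refine ((hcart.1 i).1.2 ω).unique ⟨hnorm.invariant i g hg _ (hb i).1, ?_⟩ (hb i)
    have := Set.smul_mem_smul_set (a := g) (hb i).2
    rwa [show g • ω = g ω from rfl, hgω] at this
  have hcommP : Pairwise fun i j : ι => ∀ x y : Equiv.Perm Ω,
      x ∈ N i → y ∈ N j → Commute x y :=
    fun {i j} hij x y hx hy => hcomm i j hij x hx y hy
  -- main claim: the stabiliser is generated by the intersections
  have main : ∀ g ∈ M ⊓ MulAction.stabilizer (Equiv.Perm Ω) ω,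
      g ∈ ⨆ i, (M ⊓ MulAction.stabilizer (Equiv.Perm Ω) ω) ⊓ N i := by
    intro g hg
    obtain ⟨hgM, hgω⟩ := hg
    have hgω : g ω = ω := hgω
    have hrange : g ∈ (Subgroup.noncommPiCoprod hcommP).range := by
      rw [Subgroup.noncommPiCoprod_range, hsup]; exact hgM
    obtain ⟨u, hu⟩ := hrange
    rw [Subgroup.noncommPiCoprod_apply] at hu
    set f : ι → Equiv.Perm Ω := fun i => (u i : Equiv.Perm Ω) with hf
    -- each component fixes ω
    have hcompfix : ∀ i, f i ω = ω := by
      intro i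
      have hmemk : ∀ k, k ≠ i → f k ∈ QP.partKernel (Γ i) :=
        fun k hk => hNk k i hk (u k).2
      have hrest : (Finset.univ.erase i).noncommProd f
          (fun a _ c _ hac => hcommP hac _ _ (u a).2 (u c).2) ∈ QP.partKernel (Γ i) :=
        Subgroup.noncommProd_mem _ _
          (fun j hj => hmemk j (Finset.ne_of_mem_erase hj))
      set r := (Finset.univ.erase i).noncommProd f
          (fun a _ c _ hac => hcommP hac _ _ (u a).2 (u c).2) with hr
      have hsplit : f i * r = g := by
        rw [hr, ← hu]
        exact Finset.mul_noncommProd_erase _ (Finset.mem_univ i) _ _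
      have hfieq : f i = g * r⁻¹ := by rw [← hsplit]; group
      -- f i fixes every block b k setwise
      have hfib : ∀ k, f i • b k = b k := by
        intro k
        by_cases hk : k = i
        · subst hk
          have hrinv : r⁻¹ ∈ QP.partKernel (Γ k) := inv_mem hrest
          rw [hfieq, mul_smul, hrinv (b k) (hb k).1, hfix g hgM hgω k]
        · exact hNk i k (fun h => hk h.symm) (u i).2 (b k) (hb k).1
      have hfiω : ∀ k, f i ω ∈ b k := by
        intro k
        have := Set.smul_mem_smul_set (a := f i) (hb k).2
        rwa [hfib k] at this
      exact (hcart.2.2 b fun k => (hb k).1).unique hfiω (fun k => (hb k).2)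
    -- hence each component is in the stabiliser intersection
    have hcompmem : ∀ i, f i ∈ (M ⊓ MulAction.stabilizer (Equiv.Perm Ω) ω) ⊓ N i := by
      intro i
      exact ⟨⟨hle i (u i).2, show f i • ω = ω from hcompfix i⟩, (u i).2⟩
    rw [← hu]
    exact Subgroup.noncommProd_mem _ _ fun i _ =>
      le_iSup (fun i => (M ⊓ MulAction.stabilizer (Equiv.Perm Ω) ω) ⊓ N i) i (hcompmem i)
  refine ⟨fun i => inf_le_left, ?_, ?_, ?_⟩
  · intro i j hij x hx y hy
    exact hcomm i j hij x hx.2 y hy.2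
  · exact le_antisymm (iSup_le fun i => inf_le_left) main
  · intro i
    have h1 : ((M ⊓ MulAction.stabilizer (Equiv.Perm Ω) ω) ⊓ N i) ⊓
        (⨆ j ∈ ({i}ᶜ : Set ι), (M ⊓ MulAction.stabilizer (Equiv.Perm Ω) ω) ⊓ N j) ≤
        N i ⊓ (⨆ j ∈ ({i}ᶜ : Set ι), N j) :=
      inf_le_inf inf_le_right (iSup₂_mono fun j _ => inf_le_right)
    exact le_bot_iff.mp (h1.trans (hdisj i).le)
end

section
/- Let G be a finite group, M a non-abelian minimal normal subgroup of G, and N a normal subgroup of G with M ≤ N such that N = N₁ × ⋯ × N_ℓ is an internal direct product of subgroups N₁, ..., N_ℓ that are permuted among themselves by conjugation by G. Then M = (M ∩ N₁) × ⋯ × (M ∩ N_ℓ). -/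
open scoped Pointwise

/-!
If `M` meets every factor `Nᵢ` trivially then, since `M` is normal and each `Nᵢ` is normalised by
`N ⊇ M`, every commutator `[m, n]` with `m ∈ M`, `n ∈ Nᵢ` lies in `M ∩ Nᵢ = 1`; so `M` centralises
`N = ⨆ Nᵢ ⊇ M` and is abelian. Hence some `M ∩ Nᵢ` is nontrivial, and `⨆ᵢ (M ∩ Nᵢ)` is a nontrivial
normal subgroup of `G` (conjugation permutes the `Nᵢ` and fixes `M`) contained in `M`, so by minimality
it is `M`. Independence and commutation of the factors `M ∩ Nᵢ` are inherited from the `Nᵢ`.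
-/

namespace Subgroup

variable {G : Type*} [Group G]

theorem commute_of_normal_of_inf_eq_bot {M H : Subgroup G} (hM : M.Normal) (hMH : M ⊓ H = ⊥)
    {x y : G} (hx : x ∈ M) (hxH : x ∈ normalizer (H : Set G)) (hy : y ∈ H) : Commute x y := by
  have hxM : x * y * x⁻¹ * y⁻¹ ∈ M := by
    rw [mul_assoc, mul_assoc]
    exact mul_mem hx (by simpa only [mul_assoc] using hM.conj_mem _ (inv_mem hx) y)
  have hyH : x * y * x⁻¹ * y⁻¹ ∈ H := mul_mem ((mem_normalizer_iff.mp hxH y).mp hy) (inv_mem hy)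
  have hbot : x * y * x⁻¹ * y⁻¹ ∈ M ⊓ H := ⟨hxM, hyH⟩
  rw [hMH, mem_bot] at hbot
  rwa [← commutatorElement_eq_one_iff_commute, commutatorElement_def]

theorem iSup_normal_of_conj_permutes {ι : Type*} (H : ι → Subgroup G)
    (hperm : ∀ g : G, ∀ i : ι, ∃ j : ι, (H i).map (MulAut.conj g).toMonoidHom = H j) :
    (⨆ i, H i).Normal := by
  refine ⟨fun k hk g => ?_⟩
  have hmap : (⨆ i, H i).map (MulAut.conj g).toMonoidHom ≤ ⨆ i, H i := by
    rw [map_iSup]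
    exact iSup_le fun i => (hperm g i).choose_spec ▸ le_iSup H _
  exact hmap ⟨k, hk, rfl⟩

end Subgroup

namespace QP

open Subgroup

variable {X : Type*} [Group X] {ι : Type*} {N : Subgroup X} {Ni : ι → Subgroup X}

theorem IsInternalDirectProductOver.le_normalizer (h : IsInternalDirectProductOver N Ni) (i : ι) :
    N ≤ normalizer (Ni i : Set X) := by
  rw [← h.2.2.1]
  refine iSup_le fun j => ?_
  by_cases hji : j = i
  · subst hji
    exact Subgroup.le_normalizer
  · refine le_trans (fun y hy => ?_) (centralizer_le_normalizer _)
    exact mem_centralizer_iff.mpr fun x hx => (h.2.1 i j (Ne.symm hji) x hx y hy).eq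

theorem IsInternalDirectProductOver.of_le {M : Subgroup X} {Hi : ι → Subgroup X}
    (h : IsInternalDirectProductOver N Ni) (hle : ∀ i, Hi i ≤ Ni i) (hsup : ⨆ i, Hi i = M) :
    IsInternalDirectProductOver M Hi := by
  refine ⟨fun i => hsup ▸ le_iSup Hi i, fun i j hij x hx y hy => h.2.1 i j hij x (hle i hx) y
    (hle j hy), hsup, fun i => le_bot_iff.mp ?_⟩
  rw [← h.2.2.2 i]
  exact inf_le_inf (hle i) (iSup₂_mono fun j _ => hle j)

theorem IsInternalDirectProductOver.le_centralizer_of_inf_eq_bot {M : Subgroup X}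
    (h : IsInternalDirectProductOver N Ni) (hM : M.Normal) (hMN : M ≤ N)
    (hbot : ∀ i, M ⊓ Ni i = ⊥) : M ≤ centralizer (N : Set X) := by
  rw [le_centralizer_iff, ← h.2.2.1, iSup_le_iff]
  intro i y hy
  exact mem_centralizer_iff.mpr fun x hx =>
    (commute_of_normal_of_inf_eq_bot hM (hbot i) hx (h.le_normalizer i (hMN hx)) hy).eq

end QP

theorem minimal_normal_inherits_direct_decomposition_general
    {G : Type*} [Group G] {ι : Type*}
    (M N : Subgroup G) (Ni : ι → Subgroup G)
    (hMnormal : M.Normal)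
    (hMmin : ∀ K : Subgroup G, K.Normal → K ≠ ⊥ → K ≤ M → K = M)
    (hMnonab : ¬ ∀ x ∈ M, ∀ y ∈ M, x * y = y * x)
    (hMN : M ≤ N)
    (hprod : QP.IsInternalDirectProductOver N Ni)
    (hperm : ∀ g : G, ∀ i : ι, ∃ j : ι,
      (Ni i).map (MulAut.conj g).toMonoidHom = Ni j) :
    QP.IsInternalDirectProductOver M (fun i => M ⊓ Ni i) := by
  by_cases hbot : ∀ i, M ⊓ Ni i = ⊥
  · have hcent := hprod.le_centralizer_of_inf_eq_bot hMnormal hMN hbot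
    exact absurd (fun x hx y hy => (Subgroup.mem_centralizer_iff.mp (hcent hx) y (hMN hy)).symm)
      hMnonab
  push Not at hbot
  obtain ⟨i₀, hi₀⟩ := hbot
  have hKnormal : (⨆ i, M ⊓ Ni i).Normal := by
    refine Subgroup.iSup_normal_of_conj_permutes _ fun g i => ?_
    obtain ⟨j, hj⟩ := hperm g i
    refine ⟨j, ?_⟩
    rw [Subgroup.map_inf_eq _ _ _ (MulAut.conj g).injective, hj]
    exact congrArg (· ⊓ Ni j) (Subgroup.normal_iff_map_conj_eq.mp hMnormal g)
  have hKne : (⨆ i, M ⊓ Ni i) ≠ ⊥ := fun h =>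
    hi₀ (le_bot_iff.mp (h ▸ le_iSup (fun i => M ⊓ Ni i) i₀))
  have hKM : (⨆ i, M ⊓ Ni i) = M := hMmin _ hKnormal hKne (iSup_le fun _ => inf_le_left)
  exact hprod.of_le (fun _ => inf_le_right) hKM

/-- If M is a non-abelian minimal normal subgroup of the finite group G,
N ⊴ G with M ≤ N, and N = N₁ × ⋯ × N_ℓ is an internal direct product whose factors
are permuted by G-conjugation, then M = (M ∩ N₁) × ⋯ × (M ∩ N_ℓ). -/
theorem minimal_normal_inherits_direct_decomposition
    {G : Type*} [Group G] [Finite G] {ι : Type*} [Finite ι]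
    (M N : Subgroup G) (Ni : ι → Subgroup G)
    (hMnormal : M.Normal) (hMne : M ≠ ⊥)
    (hMmin : ∀ K : Subgroup G, K.Normal → K ≠ ⊥ → K ≤ M → K = M)
    (hMnonab : ¬ ∀ x ∈ M, ∀ y ∈ M, x * y = y * x)
    (hNnormal : N.Normal) (hMN : M ≤ N)
    (hprod : QP.IsInternalDirectProductOver N Ni)
    (hperm : ∀ g : G, ∀ i : ι, ∃ j : ι,
      (Ni i).map (MulAut.conj g).toMonoidHom = Ni j) :
    QP.IsInternalDirectProductOver M (fun i => M ⊓ Ni i) :=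
  minimal_normal_inherits_direct_decomposition_general M N Ni hMnormal hMmin hMnonab hMN hprod hperm
end

section
/- Let G be a finite group with a non-abelian minimal normal subgroup M, and let N = N₁ × N₂ be a direct product normal in G containing M. Let T be a simple direct factor of M, let σ₁ : N → N₁ be the projection, and let x ∈ σ₁(T) with x ≠ 1. Then conjugation by x normalises T, i.e. T^x = T. -/
open scoped Pointwise

namespace QP
/-- A subgroup is simple: nontrivial, and with no proper nontrivial subgroup
normalised by it. -/
def IsSimpleSubgroup {X : Type*} [Group X] (T : Subgroup X) : Prop :=
  T ≠ ⊥ ∧ ∀ K : Subgroup X, K ≤ T → (∀ t ∈ T, ∀ k ∈ K, t * k * t⁻¹ ∈ K) →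
    K = ⊥ ∨ K = T
end QP

/-- Let M be a non-abelian minimal normal subgroup of the finite group G,
written as the internal direct product of simple subgroups T i permuted transitively by
G-conjugation, and let N = N₁ × N₂ be an internal direct product normal in G with
M ≤ N.  If x ∈ N₁ is a nontrivial element of the projection σ₁(T i₀) of the simple
direct factor T i₀ (that is, t = x·y for some t ∈ T i₀ and y ∈ N₂), then conjugation
by x normalises T i₀, i.e. (T i₀)ˣ = T i₀. -/
theorem projection_element_normalises_simple_factor
    {G : Type*} [Group G] [Finite G] {ι : Type*} [Finite ι]
    (M : Subgroup G) (T : ι → Subgroup G)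
    (hMnormal : M.Normal) (hMne : M ≠ ⊥)
    (hMmin : ∀ K : Subgroup G, K.Normal → K ≠ ⊥ → K ≤ M → K = M)
    (hMnonab : ¬ ∀ x ∈ M, ∀ y ∈ M, x * y = y * x)
    (hTprod : QP.IsInternalDirectProductOver M T)
    (hTsimple : ∀ i, QP.IsSimpleSubgroup (T i))
    (hTnonab : ∀ i, ¬ ∀ x ∈ T i, ∀ y ∈ T i, x * y = y * x)
    (hTperm : ∀ g : G, ∀ i : ι, ∃ j : ι,
      (T i).map (MulAut.conj g).toMonoidHom = T j)
    (hTtrans : ∀ i j : ι, ∃ g : G, (T i).map (MulAut.conj g).toMonoidHom = T j)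
    (N1 N2 : Subgroup G)
    (hcomm : ∀ x ∈ N1, ∀ y ∈ N2, Commute x y)
    (hdisj : N1 ⊓ N2 = ⊥)
    (hNnormal : (N1 ⊔ N2).Normal)
    (hMN : M ≤ N1 ⊔ N2)
    (i₀ : ι) (x : G) (hx1 : x ∈ N1) (hxne : x ≠ 1)
    (hxproj : ∃ t ∈ T i₀, ∃ y ∈ N2, t = x * y) :
    ∀ u ∈ T i₀, x * u * x⁻¹ ∈ T i₀ := by
  obtain ⟨t, ht, y, hy, hty⟩ := hxproj
  have hxeq : x = t * y⁻¹ := by rw [hty]; group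
  -- every element of N1 ⊔ N2 factors as a product
  have hsup : ∀ g ∈ N1 ⊔ N2, ∃ a ∈ N1, ∃ b ∈ N2, g = a * b := by
    intro g hg
    let S : Subgroup G :=
    { carrier := {g | ∃ a ∈ N1, ∃ b ∈ N2, g = a * b}
      one_mem' := ⟨1, N1.one_mem, 1, N2.one_mem, by simp⟩
      mul_mem' := by
        rintro p q ⟨a, ha, b, hb, rfl⟩ ⟨a', ha', b', hb', rfl⟩
        refine ⟨a * a', N1.mul_mem ha ha', b * b', N2.mul_mem hb hb', ?_⟩
        have hba : b * a' = a' * b := ((hcomm a' ha' b hb).symm).eq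
        calc a * b * (a' * b') = a * (b * a') * b' := by group
          _ = a * (a' * b) * b' := by rw [hba]
          _ = a * a' * (b * b') := by group
      inv_mem' := by
        rintro p ⟨a, ha, b, hb, rfl⟩
        refine ⟨a⁻¹, N1.inv_mem ha, b⁻¹, N2.inv_mem hb, ?_⟩
        have hba : b⁻¹ * a⁻¹ = a⁻¹ * b⁻¹ :=
          (((hcomm a ha b hb).inv_left).inv_right).symm.eq
        rw [mul_inv_rev, hba] }
    have hN1S : N1 ≤ S := fun g hg => ⟨g, hg, 1, N2.one_mem, by simp⟩
    have hN2S : N2 ≤ S := fun g hg => ⟨1, N1.one_mem, g, hg, by simp⟩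
    exact sup_le hN1S hN2S hg
  -- N2 is normalised by every element of N1 ⊔ N2
  have hN2conj : ∀ g ∈ N1 ⊔ N2, ∀ n ∈ N2, g * n * g⁻¹ ∈ N2 := by
    intro g hg n hn
    obtain ⟨a, ha, b, hb, rfl⟩ := hsup g hg
    have hmem : b * n * b⁻¹ ∈ N2 := N2.mul_mem (N2.mul_mem hb hn) (N2.inv_mem hb)
    have h2 : a * (b * n * b⁻¹) = (b * n * b⁻¹) * a := hcomm a ha _ hmem
    have key : a * b * n * (a * b)⁻¹ = b * n * b⁻¹ := by
      calc a * b * n * (a * b)⁻¹ = a * (b * n * b⁻¹) * a⁻¹ := by group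
        _ = (b * n * b⁻¹) * a * a⁻¹ := by rw [h2]
        _ = b * n * b⁻¹ := by group
    rw [key]; exact hmem
  by_contra hc
  push_neg at hc
  obtain ⟨u₀, hu₀, hbad⟩ := hc
  obtain ⟨j, hj⟩ := hTperm x i₀
  have hmemj : ∀ u ∈ T i₀, x * u * x⁻¹ ∈ T j := by
    intro u hu
    rw [← hj]
    exact Subgroup.mem_map.2 ⟨u, hu, by simp⟩
  have hne : i₀ ≠ j := by rintro rfl; exact hbad (hmemj u₀ hu₀)
  have hAB : ∀ p ∈ T j, ∀ q ∈ T i₀, Commute p q := hTprod.2.1 j i₀ (Ne.symm hne)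
  have hA : ∀ u ∈ T i₀, ∀ v ∈ T i₀, Commute (x * u * x⁻¹) v :=
    fun u hu v hv => hAB _ (hmemj u hu) v hv
  have hB : ∀ u ∈ T i₀, ∀ v ∈ T i₀, (y⁻¹ * u * y) * v = v * (y⁻¹ * u * y) := by
    intro u hu v hv
    have hv' : t * v * t⁻¹ ∈ T i₀ :=
      (T i₀).mul_mem ((T i₀).mul_mem ht hv) ((T i₀).inv_mem ht)
    have hAeq : (x * u * x⁻¹) * (t * v * t⁻¹) = (t * v * t⁻¹) * (x * u * x⁻¹) :=
      (hA u hu _ hv').eq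
    rw [hxeq] at hAeq
    have h3 := congrArg (fun z => t⁻¹ * z * t) hAeq
    beta_reduce at h3
    group at h3 ⊢
    exact h3
  -- all commutators of T i₀ lie in N2
  have hcommN2 : ∀ u ∈ T i₀, ∀ v ∈ T i₀, u⁻¹ * v * u * v⁻¹ ∈ N2 := by
    intro u hu v hv
    have huN : u ∈ N1 ⊔ N2 := hMN (hTprod.1 i₀ hu)
    have hvN : v ∈ N1 ⊔ N2 := hMN (hTprod.1 i₀ hv)
    obtain ⟨a, ha, b, hb, hab⟩ := hsup u huN
    set w := y⁻¹ * u * y with hw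
    have hn : u⁻¹ * w ∈ N2 := by
      have hca : a⁻¹ * y⁻¹ = y⁻¹ * a⁻¹ := (((hcomm a ha y hy).inv_left).inv_right).eq
      have heq : u⁻¹ * w = b⁻¹ * y⁻¹ * b * y := by
        rw [hw, hab]
        calc (a * b)⁻¹ * (y⁻¹ * (a * b) * y)
            = b⁻¹ * (a⁻¹ * y⁻¹) * (a * (b * y)) := by group
          _ = b⁻¹ * (y⁻¹ * a⁻¹) * (a * (b * y)) := by rw [hca]
          _ = b⁻¹ * y⁻¹ * b * y := by group
      rw [heq]
      exact N2.mul_mem (N2.mul_mem (N2.mul_mem (N2.inv_mem hb) (N2.inv_mem hy)) hb) hy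
    have hBe : w * v = v * w := hB u hu v hv
    have key : u⁻¹ * v * u * v⁻¹ = (u⁻¹ * w) * (v * (u⁻¹ * w)⁻¹ * v⁻¹) := by
      calc u⁻¹ * v * u * v⁻¹ = u⁻¹ * (v * w) * w⁻¹ * u * v⁻¹ := by group
        _ = u⁻¹ * (w * v) * w⁻¹ * u * v⁻¹ := by rw [← hBe]
        _ = (u⁻¹ * w) * (v * (u⁻¹ * w)⁻¹ * v⁻¹) := by group
    rw [key]
    exact N2.mul_mem hn (hN2conj v hvN _ (N2.inv_mem hn))
  -- use simplicity of T i₀ on K = T i₀ ⊓ N2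
  have hKnorm : ∀ s ∈ T i₀, ∀ k ∈ T i₀ ⊓ N2, s * k * s⁻¹ ∈ T i₀ ⊓ N2 := by
    intro s hs k hk
    exact ⟨(T i₀).mul_mem ((T i₀).mul_mem hs hk.1) ((T i₀).inv_mem hs),
      hN2conj s (hMN (hTprod.1 i₀ hs)) k hk.2⟩
  rcases (hTsimple i₀).2 (T i₀ ⊓ N2) inf_le_left hKnorm with hKbot | hKtop
  · -- K = ⊥ : T i₀ would be abelian
    apply hTnonab i₀
    intro u hu v hv
    have h1 : u⁻¹ * v * u * v⁻¹ ∈ T i₀ ⊓ N2 :=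
      ⟨(T i₀).mul_mem ((T i₀).mul_mem ((T i₀).mul_mem ((T i₀).inv_mem hu) hv) hu)
        ((T i₀).inv_mem hv), hcommN2 u hu v hv⟩
    rw [hKbot, Subgroup.mem_bot] at h1
    have h4 : u⁻¹ * v * u = v := by
      have := mul_inv_eq_one.mp h1
      exact this
    have h5 : u * (u⁻¹ * v * u) = v * u := by group
    rw [h4] at h5
    exact h5
  · -- K = T i₀ : then T i₀ ≤ N2 and x = 1
    have hle : T i₀ ≤ N2 := inf_eq_left.mp hKtop
    have hxN2 : x ∈ N2 := by
      rw [hxeq]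
      exact N2.mul_mem (hle ht) (N2.inv_mem hy)
    have : x ∈ N1 ⊓ N2 := ⟨hx1, hxN2⟩
    rw [hdisj, Subgroup.mem_bot] at this
    exact hxne this
end

section
/- Let G ≤ Sym(Ω) be a finite permutation group, M a transitive non-abelian minimal normal subgroup of G, and E a G-invariant Cartesian decomposition of Ω that is N-normal for some transitive normal subgroup N of G with M ≤ N. Then E is M-normal and G acts transitively on E. -/
open scoped Pointwise

section Descends

open scoped Pointwise

private lemma decompAux {G : Type*} [Group G] {ι : Type*} [Fintype ι]
    (J : ι → Subgroup G)
    (hcomm : ∀ i j : ι, i ≠ j → ∀ x ∈ J i, ∀ y ∈ J j, Commute x y)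
    {n : G} (hn : n ∈ ⨆ i, J i) :
    ∃ x : ι → G, (∀ i, x i ∈ J i) ∧
      (∀ i, ∃ r ∈ ⨆ j, ⨆ (_ : j ≠ i), J j, n = x i * r) ∧
      (∀ S : Subgroup G, (∀ i, x i ∈ S) → n ∈ S) := by
  classical
  have hcomm' : Pairwise fun i j : ι => ∀ x y : G, x ∈ J i → y ∈ J j → Commute x y :=
    fun i j hij x y hx hy => hcomm i j hij x hx y hy
  rw [← Subgroup.noncommPiCoprod_range (hcomm := hcomm')] at hn
  obtain ⟨u, hu⟩ := hn
  refine ⟨fun i => ↑(u i), fun i => (u i).2, ?_, ?_⟩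
  · intro i
    have hins : (Finset.univ : Finset ι) = insert i (Finset.univ.erase i) :=
      (Finset.insert_erase (Finset.mem_univ i)).symm
    have hn' := (Subgroup.noncommPiCoprod_apply hcomm' u).symm.trans hu
    rw [hins] at hn'
    have h' := Finset.noncommProd_insert_of_notMem (Finset.univ.erase i) i (fun j => (u j : G))
      (by rw [← hins]; exact fun a _ b _ hab => hcomm a b hab _ (u a).2 _ (u b).2)
      (Finset.notMem_erase i _)
    replace hn' := h'.symm.trans hn'
    refine ⟨(Finset.univ.erase i).noncommProd (fun j => ↑(u j)) ?_, ?_, hn'.symm⟩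
    · intro a _ b _ hab
      exact hcomm a b hab _ (u a).2 _ (u b).2
    · apply Subgroup.noncommProd_mem
      intro j hj
      exact Subgroup.mem_iSup_of_mem j
        (Subgroup.mem_iSup_of_mem (Finset.ne_of_mem_erase hj) (u j).2)
  · intro S hS
    have hn' := (Subgroup.noncommPiCoprod_apply hcomm' u).symm.trans hu
    rw [← hn']
    exact Subgroup.noncommProd_mem S _ (fun j _ => hS j)

private lemma memPkAux {Ω : Type*} {g : Equiv.Perm Ω} {P : Set (Set Ω)} :
    g ∈ QP.partKernel P ↔ ∀ b ∈ P, g • b = b :=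
  Iff.rfl

private lemma pkConjAux {Ω : Type*} (g : Equiv.Perm Ω) {h : Equiv.Perm Ω} {P : Set (Set Ω)}
    (hh : h ∈ QP.partKernel P) : g * h * g⁻¹ ∈ QP.partKernel (g • P) := by
  rw [memPkAux]
  intro b hb
  obtain ⟨a, ha, rfl⟩ := Set.mem_smul_set.mp hb
  have h1 : (g * h * g⁻¹) • (g • a) = g • (h • a) := by
    rw [smul_smul, smul_smul]
    congr 1
    group
  rw [h1, memPkAux.mp hh a ha]

private lemma supConvAux {α G : Type*} [Group G] (E : Set α) (K : α → Subgroup G) (i : ↥E) :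
    (⨆ j : ↥E, ⨆ (_ : j ≠ i), K ↑j) = ⨆ Q ∈ E \ {(i : α)}, K Q := by
  apply le_antisymm
  · refine iSup₂_le fun j hj => ?_
    exact le_iSup₂_of_le (j : α) ⟨j.2, fun h => hj (Subtype.ext h)⟩ le_rfl
  · refine iSup₂_le fun Q hQ => ?_
    exact le_iSup₂_of_le (⟨Q, hQ.1⟩ : ↥E) (fun h => hQ.2 (congrArg Subtype.val h)) le_rfl

private lemma supSubtypeAux {α G : Type*} [Group G] (E : Set α) (K : α → Subgroup G) :
    (⨆ i : ↥E, K ↑i) = ⨆ P ∈ E, K P := by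
  apply le_antisymm
  · exact iSup_le fun i => le_iSup₂_of_le (↑i : α) i.2 le_rfl
  · exact iSup₂_le fun P hP => le_iSup_of_le (⟨P, hP⟩ : ↥E) le_rfl

end Descends

/-- If G ≤ Sym(Ω) has a transitive non-abelian minimal normal subgroup M,
and E is a G-invariant Cartesian decomposition of Ω which is N-normal for a transitive
normal subgroup N of G with M ≤ N, then E is M-normal and G is transitive on E. -/
theorem normal_decomposition_descends_to_minimal_normal
    {Ω : Type*} [Finite Ω]
    (G M N : Subgroup (Equiv.Perm Ω)) (E : Set (Set (Set Ω)))
    (hcart : QP.IsCartesianDecompSet E)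
    (hinv : QP.InvariantDec G E)
    (hMmin : QP.IsMinimalNormalIn M G)
    (hMtrans : QP.IsTransitivePerm M)
    (hMnonab : ¬ ∀ x ∈ M, ∀ y ∈ M, x * y = y * x)
    (hNnorm : QP.IsNormalIn N G)
    (hNtrans : QP.IsTransitivePerm N)
    (hMN : M ≤ N)
    (hNdec : QP.IsNormalDecompSet N E) :
    QP.IsNormalDecompSet M E ∧ QP.TransitiveOnDec G E := by
  classical
  obtain ⟨hfix, K, hK1, hK2, hK3, hK4, hK5⟩ := hNdec
  obtain ⟨⟨hMG, hMconj⟩, hMne, hMmin'⟩ := hMmin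
  obtain ⟨hNG, hNconj⟩ := hNnorm
  haveI : Fintype ↥E := hcart.1.fintype
  -- commuting family over the subtype
  have hJcomm : ∀ i j : ↥E, i ≠ j → ∀ x ∈ K ↑i, ∀ y ∈ K ↑j, Commute x y :=
    fun i j hij x hx y hy => hK2 ↑i ↑j i.2 j.2 (fun h => hij (Subtype.ext h)) x hx y hy
  have supJ : (⨆ i : ↥E, K ↑i) = N := (supSubtypeAux E K).trans hK3
  have hKpk : ∀ P ∈ E, ∀ Q ∈ E, Q ≠ P → K Q ≤ QP.partKernel P := by
    intro P hP Q hQ hQP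
    have h1 : K Q ≤ ⨆ R ∈ E \ {P}, K R := le_iSup₂_of_le Q ⟨hQ, hQP⟩ le_rfl
    rw [← hK5 P hP] at h1
    exact h1.trans inf_le_right
  -- "kernel intersection" lemma : if n ∈ N lies in the kernel of every partition other
  -- than P, then n ∈ K P
  have hCK : ∀ P, ∀ hP : P ∈ E, ∀ n ∈ N,
      (∀ Q ∈ E, Q ≠ P → n ∈ QP.partKernel Q) → n ∈ K P := by
    intro P hP n hnN hnpk
    have hn : n ∈ ⨆ i : ↥E, K ↑i := supJ ▸ hnN
    obtain ⟨x, hx1, hx2, hx3⟩ := decompAux _ hJcomm hn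
    have hzero : ∀ j : ↥E, j ≠ ⟨P, hP⟩ → x j = 1 := by
      intro j hj
      obtain ⟨r, hr, hnr⟩ := hx2 j
      rw [supConvAux E K j, ← hK5 ↑j j.2] at hr
      have hjP : (j : Set (Set Ω)) ≠ P := fun h => hj (Subtype.ext h)
      have hxj : x j ∈ QP.partKernel ↑j := by
        have hxe : x j = n * r⁻¹ := by rw [hnr]; group
        rw [hxe]
        exact mul_mem (hnpk ↑j j.2 hjP) (inv_mem (Subgroup.mem_inf.mp hr).2)
      have hmem : x j ∈ K ↑j ⊓ (⨆ Q ∈ E \ {(j : Set (Set Ω))}, K Q) := by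
        rw [← hK5 ↑j j.2]
        exact Subgroup.mem_inf.mpr ⟨hx1 j,
          Subgroup.mem_inf.mpr ⟨hK1 ↑j j.2 (hx1 j), hxj⟩⟩
      rw [hK4 ↑j j.2] at hmem
      exact hmem
    refine hx3 (K P) fun j => ?_
    by_cases hj : j = ⟨P, hP⟩
    · subst hj; exact hx1 ⟨P, hP⟩
    · rw [hzero j hj]; exact one_mem _
  -- conjugation moves M ⊓ K R to M ⊓ K (g • R)
  have hconj : ∀ g ∈ G, ∀ R ∈ E, ∀ d ∈ M ⊓ K R, g * d * g⁻¹ ∈ M ⊓ K (g • R) := by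
    intro g hg R hR d hd
    obtain ⟨hdM, hdK⟩ := Subgroup.mem_inf.mp hd
    refine Subgroup.mem_inf.mpr ⟨hMconj g hg d hdM, ?_⟩
    refine hCK (g • R) (hinv g hg R hR) _ (hNconj g hg d (hK1 R hR hdK)) ?_
    intro Q' hQ' hQ'ne
    have hR' : g⁻¹ • Q' ∈ E := hinv g⁻¹ (inv_mem hg) Q' hQ'
    have hne : R ≠ g⁻¹ • Q' := by
      intro h
      exact hQ'ne (by rw [h, smul_inv_smul])
    have hd' : d ∈ QP.partKernel (g⁻¹ • Q') := hKpk (g⁻¹ • Q') hR' R hR hne hdK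
    have h2 := pkConjAux g hd'
    rwa [smul_inv_smul] at h2
  -- if all M ⊓ K P are trivial then M is abelian, contradiction
  have habel : (∀ i : ↥E, M ⊓ K ↑i = ⊥) → False := by
    intro hbot
    apply hMnonab
    intro x hx y hy
    have hyN : y ∈ ⨆ i : ↥E, K ↑i := supJ ▸ hMN hy
    have hxN : x ∈ ⨆ i : ↥E, K ↑i := supJ ▸ hMN hx
    obtain ⟨yc, hy1, hy2, hy3⟩ := decompAux _ hJcomm hyN
    obtain ⟨xc, hx1, hx2, hx3⟩ := decompAux _ hJcomm hxN
    have key : ∀ j : ↥E, yc j ∈ Subgroup.centralizer {x} := by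
      intro j
      rw [Subgroup.mem_centralizer_iff]
      intro h hh
      rw [Set.mem_singleton_iff] at hh
      rw [hh]
      obtain ⟨r, hr, hxr⟩ := hx2 j
      have hcent : (⨆ k : ↥E, ⨆ (_ : k ≠ j), K ↑k) ≤
          Subgroup.centralizer (K ↑j : Set (Equiv.Perm Ω)) := by
        refine iSup₂_le fun k hk => ?_
        intro a ha
        rw [Subgroup.mem_centralizer_iff]
        intro b hb
        exact ((hJcomm k j hk a ha b hb).eq).symm
      have hcomm_r : yc j * r = r * yc j :=
        Subgroup.mem_centralizer_iff.mp (hcent hr) (yc j) (hy1 j)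
      have h5 : r * yc j * r⁻¹ = yc j := by
        rw [← hcomm_r, mul_inv_cancel_right]
      have hc : x * yc j * x⁻¹ * (yc j)⁻¹ ∈ M ⊓ K ↑j := by
        refine Subgroup.mem_inf.mpr ⟨?_, ?_⟩
        · have h1 : yc j * x⁻¹ * (yc j)⁻¹ ∈ M :=
            hMconj (yc j) (hNG (hK1 ↑j j.2 (hy1 j))) x⁻¹ (inv_mem hx)
          have h2 : x * yc j * x⁻¹ * (yc j)⁻¹ = x * (yc j * x⁻¹ * (yc j)⁻¹) := by group
          rw [h2]
          exact mul_mem hx h1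
        · have h2 : x * yc j * x⁻¹ * (yc j)⁻¹
              = xc j * (r * yc j * r⁻¹) * (xc j)⁻¹ * (yc j)⁻¹ := by
            rw [hxr]; group
          rw [h2, h5]
          exact mul_mem (mul_mem (mul_mem (hx1 j) (hy1 j)) (inv_mem (hx1 j)))
            (inv_mem (hy1 j))
      rw [hbot j] at hc
      have hc1 : x * yc j * x⁻¹ * (yc j)⁻¹ = 1 := Subgroup.mem_bot.mp hc
      have h6 : x * yc j * x⁻¹ = yc j := mul_inv_eq_one.mp hc1
      calc x * yc j = (x * yc j * x⁻¹) * x := by group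
        _ = yc j * x := by rw [h6]
    have hyc : y ∈ Subgroup.centralizer {x} := hy3 _ key
    exact Subgroup.mem_centralizer_iff.mp hyc x rfl
  -- the candidate subgroup D
  have hDsub : (⨆ Q ∈ E, (M ⊓ K Q)) = ⨆ i : ↥E, (M ⊓ K ↑i) :=
    (supSubtypeAux E fun Q => M ⊓ K Q).symm
  have hDleM : (⨆ Q ∈ E, (M ⊓ K Q)) ≤ M := iSup₂_le fun Q hQ => inf_le_left
  have hDnorm : QP.IsNormalIn (⨆ Q ∈ E, (M ⊓ K Q)) G := by
    constructor
    · exact hDleM.trans hMG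
    · intro g hg n hn
      have hle : (⨆ Q ∈ E, (M ⊓ K Q)) ≤
          Subgroup.comap ((MulAut.conj g).toMonoidHom) (⨆ Q ∈ E, (M ⊓ K Q)) := by
        refine iSup₂_le fun R hR => ?_
        intro d hd
        rw [Subgroup.mem_comap]
        have h1 := hconj g hg R hR d hd
        have h2 : (MulAut.conj g).toMonoidHom d = g * d * g⁻¹ := rfl
        rw [h2]
        exact Subgroup.mem_iSup_of_mem (g • R) (Subgroup.mem_iSup_of_mem (hinv g hg R hR) h1)
      have h3 := hle hn
      rw [Subgroup.mem_comap] at h3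
      have h2 : (MulAut.conj g).toMonoidHom n = g * n * g⁻¹ := rfl
      rwa [h2] at h3
  have hDne : (⨆ Q ∈ E, (M ⊓ K Q)) ≠ ⊥ := by
    intro h
    apply habel
    intro i
    have h1 : M ⊓ K ↑i ≤ ⨆ Q ∈ E, (M ⊓ K Q) := le_iSup₂_of_le (↑i) i.2 le_rfl
    rw [h] at h1
    exact le_bot_iff.mp h1
  have hDM : (⨆ Q ∈ E, (M ⊓ K Q)) = M := hMmin' _ hDnorm hDne hDleM
  -- clause 5
  have hclause5 : ∀ P ∈ E, (M ⊓ K P) ⊓ (⨆ Q ∈ E \ {P}, (M ⊓ K Q)) = ⊥ := by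
    intro P hP
    rw [eq_bot_iff, ← hK4 P hP]
    exact inf_le_inf inf_le_right (iSup₂_mono fun Q hQ => inf_le_right)
  -- clause 6
  have hclause6' : ∀ P ∈ E, (⨆ Q ∈ E \ {P}, (M ⊓ K Q)) ≤ M ⊓ QP.partKernel P :=
    fun P hP => iSup₂_le fun Q hQ =>
      le_inf inf_le_left (inf_le_right.trans (hKpk P hP Q hQ.1 hQ.2))
  have hclause6 : ∀ P, ∀ hP : P ∈ E,
      M ⊓ QP.partKernel P ≤ ⨆ Q ∈ E \ {P}, (M ⊓ K Q) := by
    intro P hP m hm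
    obtain ⟨hmM, hmpk⟩ := Subgroup.mem_inf.mp hm
    have hm' : m ∈ ⨆ i : ↥E, (M ⊓ K ↑i) := by rw [← hDsub, hDM]; exact hmM
    have hJ'comm : ∀ i j : ↥E, i ≠ j → ∀ x ∈ M ⊓ K ↑i, ∀ y ∈ M ⊓ K ↑j, Commute x y :=
      fun i j hij x hx y hy =>
        hJcomm i j hij x (Subgroup.mem_inf.mp hx).2 y (Subgroup.mem_inf.mp hy).2
    obtain ⟨x, hx1, hx2, hx3⟩ := decompAux _ hJ'comm hm'
    obtain ⟨r, hr, hmr⟩ := hx2 ⟨P, hP⟩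
    rw [supConvAux E (fun Q => M ⊓ K Q) ⟨P, hP⟩] at hr
    have hrpk : r ∈ QP.partKernel P := by
      have hle : (⨆ Q ∈ E \ {P}, (M ⊓ K Q)) ≤ QP.partKernel P :=
        iSup₂_le fun Q hQ => inf_le_right.trans (hKpk P hP Q hQ.1 hQ.2)
      exact hle hr
    have hx0 : x ⟨P, hP⟩ ∈ K P ⊓ (⨆ Q ∈ E \ {P}, K Q) := by
      rw [← hK5 P hP]
      have hxP : x ⟨P, hP⟩ ∈ QP.partKernel P := by
        have hxe : x ⟨P, hP⟩ = m * r⁻¹ := by rw [hmr]; group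
        rw [hxe]
        exact mul_mem hmpk (inv_mem hrpk)
      exact Subgroup.mem_inf.mpr ⟨(Subgroup.mem_inf.mp (hx1 ⟨P, hP⟩)).2,
        Subgroup.mem_inf.mpr ⟨hMN ((Subgroup.mem_inf.mp (hx1 ⟨P, hP⟩)).1), hxP⟩⟩
    rw [hK4 P hP] at hx0
    have hmeq : m = r := by
      rw [hmr, Subgroup.mem_bot.mp hx0, one_mul]
    rw [hmeq]
    exact hr
  -- triviality of the components is impossible
  haveI : Nonempty Ω := by
    by_contra hne
    haveI : IsEmpty Ω := not_nonempty_iff.mp hne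
    apply hMne
    ext g
    simp only [Subgroup.mem_bot]
    constructor
    · intro _; exact Equiv.ext fun ω => isEmptyElim ω
    · rintro rfl; exact one_mem M
  have hMnotpk : ∀ P ∈ E, ¬ (M ≤ QP.partKernel P) := by
    intro P hP hle
    obtain ⟨⟨hPemp, hPex⟩, hPuniv, hPsing⟩ := hcart.2.1 P hP
    obtain ⟨ω0⟩ := ‹Nonempty Ω›
    obtain ⟨b, ⟨hbP, hω0b⟩, hbuniq⟩ := hPex ω0
    have hbne : b ≠ Set.univ := by
      intro h
      apply hPuniv
      apply Set.eq_singleton_iff_unique_mem.mpr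
      constructor
      · rw [← h]; exact hbP
      · intro c hc
        have hcne : c ≠ ∅ := fun hh => hPemp (hh ▸ hc)
        obtain ⟨ω', hω'⟩ := Set.nonempty_iff_ne_empty.mpr hcne
        obtain ⟨b', hb', hb'uniq⟩ := hPex ω'
        have h1 : c = b' := hb'uniq c ⟨hc, hω'⟩
        have h2 : Set.univ = b' := hb'uniq Set.univ ⟨h ▸ hbP, Set.mem_univ ω'⟩
        rw [h1, ← h2]
    obtain ⟨ω', hω'⟩ := (Set.ne_univ_iff_exists_notMem b).mp hbne
    obtain ⟨g, hgM, hgω⟩ := hMtrans ω0 ω'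
    have hgb : g • b = b := (hle hgM) b hbP
    apply hω'
    rw [← hgω, ← hgb]
    exact Set.smul_mem_smul_set hω0b
  have hNPne : ∀ P ∈ E, M ⊓ K P ≠ ⊥ := by
    intro P hP hbot
    apply hMnotpk P hP
    have hMD : M = ⨆ Q ∈ E, (M ⊓ K Q) := hDM.symm
    rw [hMD]
    refine iSup₂_le fun Q hQ => ?_
    by_cases h : Q = P
    · subst h; rw [hbot]; exact bot_le
    · exact inf_le_right.trans (hKpk P hP Q hQ h)
  constructor
  · -- M-normality
    refine ⟨fun g hg P hP => hfix g (hMN hg) P hP,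
      fun Q => M ⊓ K Q, fun P hP => inf_le_left, ?_, hDM, hclause5, ?_⟩
    · intro P Q hP hQ hPQ x hx y hy
      exact hK2 P Q hP hQ hPQ x (Subgroup.mem_inf.mp hx).2 y (Subgroup.mem_inf.mp hy).2
    · intro P hP
      exact le_antisymm (hclause6 P hP) (hclause6' P hP)
  · -- transitivity of G on E
    intro P hP Q hQ
    by_contra hcon
    push_neg at hcon
    have hM'norm : QP.IsNormalIn (⨆ R ∈ {R | R ∈ E ∧ ∃ g ∈ G, g • P = R}, (M ⊓ K R)) G := by
      constructor
      · exact iSup₂_le fun R hR => inf_le_left.trans hMG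
      · intro g hg n hn
        have hle : (⨆ R ∈ {R | R ∈ E ∧ ∃ g ∈ G, g • P = R}, (M ⊓ K R)) ≤
            Subgroup.comap ((MulAut.conj g).toMonoidHom)
              (⨆ R ∈ {R | R ∈ E ∧ ∃ g ∈ G, g • P = R}, (M ⊓ K R)) := by
          refine iSup₂_le fun R hR => ?_
          intro d hd
          rw [Subgroup.mem_comap]
          have h1 := hconj g hg R hR.1 d hd
          have h2 : (MulAut.conj g).toMonoidHom d = g * d * g⁻¹ := rfl
          rw [h2]
          obtain ⟨g0, hg0G, hg0P⟩ := hR.2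
          have hmem : g • R ∈ {R | R ∈ E ∧ ∃ g ∈ G, g • P = R} :=
            ⟨hinv g hg R hR.1, g * g0, mul_mem hg hg0G, by rw [mul_smul, hg0P]⟩
          exact Subgroup.mem_iSup_of_mem (g • R) (Subgroup.mem_iSup_of_mem hmem h1)
        have h3 := hle hn
        rw [Subgroup.mem_comap] at h3
        have h2 : (MulAut.conj g).toMonoidHom n = g * n * g⁻¹ := rfl
        rwa [h2] at h3
    have hM'ne : (⨆ R ∈ {R | R ∈ E ∧ ∃ g ∈ G, g • P = R}, (M ⊓ K R)) ≠ ⊥ := by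
      intro h
      apply hNPne P hP
      have h1 : M ⊓ K P ≤ ⨆ R ∈ {R | R ∈ E ∧ ∃ g ∈ G, g • P = R}, (M ⊓ K R) :=
        le_iSup₂_of_le P ⟨hP, 1, one_mem G, one_smul _ _⟩ le_rfl
      rw [h] at h1
      exact le_bot_iff.mp h1
    have hM'le : (⨆ R ∈ {R | R ∈ E ∧ ∃ g ∈ G, g • P = R}, (M ⊓ K R)) ≤ M :=
      iSup₂_le fun R hR => inf_le_left
    have hM'M : (⨆ R ∈ {R | R ∈ E ∧ ∃ g ∈ G, g • P = R}, (M ⊓ K R)) = M :=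
      hMmin' _ hM'norm hM'ne hM'le
    have h1 : M ⊓ K Q ≤ ⨆ R ∈ E \ {Q}, (M ⊓ K R) := by
      have h2 : M ⊓ K Q ≤ ⨆ R ∈ {R | R ∈ E ∧ ∃ g ∈ G, g • P = R}, (M ⊓ K R) :=
        le_trans inf_le_left hM'M.ge
      refine h2.trans (iSup₂_le fun R hR => ?_)
      refine le_iSup₂_of_le R ⟨hR.1, fun hh => ?_⟩ le_rfl
      obtain ⟨g, hgG, hgP⟩ := hR.2
      exact hcon g hgG (hgP.trans hh)
    have h3 : M ⊓ K Q = ⊥ := by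
      rw [← hclause5 Q hQ]
      exact le_antisymm (le_inf le_rfl h1) inf_le_left
    exact hNPne Q hQ h3
end

section
/- Let G be a finite permutation group on Ω with a blow-up decomposition E, let Γ₀ ∈ E, and suppose the component G^{Γ₀} is quasiprimitive on Γ₀ with non-abelian socle. Then G is quasiprimitive on Ω. -/
/-!
Let `K` be a nontrivial normal subgroup of `G` and `R = K ⊓ M`. The elements of `R` acting
on the coordinate `Γ₀` alone induce a normal subgroup of `G^{Γ₀}`. If it is nontrivial it is
transitive on `Γ₀`, and its `G`-conjugates move every coordinate independently, so `R`, and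
hence `K`, is transitive on `Ω`. Otherwise, transporting by `G`, `R` meets every coordinate
subgroup of `M` trivially, so it centralises `M`. But a normal subgroup of `G` that stabilises
`Γ₀` and centralises `M` is trivial: its component centralises `Soc(G^{Γ₀}) = M^{Γ₀}`, while
in a quasiprimitive group every nontrivial normal subgroup contains a transitive minimal
normal subgroup, which would be abelian and self-centralising, forcing the socle to be
abelian. So `R = 1`, whence `K` centralises `M`; then `K` fixes every partition of `E`, and
`K = 1` too.
-/


open scoped Pointwise

namespace QP

open scoped commutatorElement

section Group

variable {X : Type*} [Group X]

lemma IsNormalIn.inf {K M G : Subgroup X} (hK : IsNormalIn K G) (hM : IsNormalIn M G) :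
    IsNormalIn (K ⊓ M) G :=
  ⟨inf_le_left.trans hK.1, fun g hg x hx => ⟨hK.2 g hg x hx.1, hM.2 g hg x hx.2⟩⟩

lemma commute_of_inf_eq_bot {K W : Subgroup X} (h : K ⊓ W = ⊥) {k w : X} (hk : k ∈ K)
    (hw : w ∈ W) (hkw : k * w * k⁻¹ ∈ W) (hwk : w * k * w⁻¹ ∈ K) : Commute k w := by
  rw [← commutatorElement_eq_one_iff_commute, ← Subgroup.mem_bot, ← h]
  refine ⟨?_, ?_⟩
  · rw [show ⁅k, w⁆ = k * (w * k * w⁻¹)⁻¹ by group]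
    exact K.mul_mem hk (K.inv_mem hwk)
  · rw [commutatorElement_def]
    exact W.mul_mem hkw (W.inv_mem hw)

lemma ne_bot_of_not_forall_commute {S : Subgroup X}
    (h : ¬ ∀ x ∈ S, ∀ y ∈ S, x * y = y * x) : S ≠ ⊥ := by
  rintro rfl
  exact h fun x hx y hy => by rw [Subgroup.mem_bot.mp hx, Subgroup.mem_bot.mp hy]

lemma exists_isMinimalNormalIn_le [Finite X] {C H : Subgroup X} (hC : IsNormalIn C H)
    (hC' : C ≠ ⊥) : ∃ L, IsMinimalNormalIn L H ∧ L ≤ C := by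
  obtain ⟨L, ⟨hLH, hL, hLC⟩, hmin⟩ :=
    (Set.toFinite {L : Subgroup X | IsNormalIn L H ∧ L ≠ ⊥ ∧ L ≤ C}).exists_minimal
      ⟨C, hC, hC', le_rfl⟩
  exact ⟨L, ⟨hLH, hL, fun K hK hK' hKL => le_antisymm hKL (hmin ⟨hK, hK', hKL.trans hLC⟩ hKL)⟩,
    hLC⟩

lemma IsMinimalNormalIn.le_socle {L H : Subgroup X} (hL : IsMinimalNormalIn L H) :
    L ≤ socle H :=
  le_iSup₂ (f := fun N (_ : N ∈ {N | IsMinimalNormalIn N H}) => N) L hL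

end Group

section Perm

variable {α : Type*}

lemma IsTransitivePerm.mono {H K : Subgroup (Equiv.Perm α)} (hH : IsTransitivePerm H)
    (hHK : H ≤ K) : IsTransitivePerm K := fun a b =>
  (hH a b).imp fun _ hg => ⟨hHK hg.1, hg.2⟩

lemma IsTransitivePerm.mem_of_forall_commute {L : Subgroup (Equiv.Perm α)}
    (hL : IsTransitivePerm L) (hLab : ∀ x ∈ L, ∀ y ∈ L, Commute x y) (a₀ : α)
    {s : Equiv.Perm α} (hs : ∀ x ∈ L, Commute x s) : s ∈ L := by
  obtain ⟨l, hl, hla⟩ := hL a₀ (s a₀)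
  convert hl
  ext b
  obtain ⟨g, hg, rfl⟩ := hL a₀ b
  calc s (g a₀) = g (s a₀) := (congrArg (· a₀) (hs g hg)).symm
    _ = g (l a₀) := by rw [hla]
    _ = l (g a₀) := congrArg (· a₀) (hLab g hg l hl)

lemma IsQuasiprimitivePerm.eq_bot_of_forall_commute_socle [Finite α]
    {H C : Subgroup (Equiv.Perm α)} (hH : IsQuasiprimitivePerm H)
    (hsoc : ¬ ∀ x ∈ socle H, ∀ y ∈ socle H, x * y = y * x) (hC : IsNormalIn C H)
    (hCsoc : ∀ c ∈ C, ∀ s ∈ socle H, Commute c s) : C = ⊥ := by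
  by_contra hC'
  obtain ⟨L, hLmin, hLC⟩ := exists_isMinimalNormalIn_le hC hC'
  have hLab : ∀ x ∈ L, ∀ y ∈ L, Commute x y := fun x hx y hy =>
    hCsoc x (hLC hx) y (hLmin.le_socle hy)
  have hL : IsTransitivePerm L := hH.2 L hLmin.1 hLmin.2.1
  refine hsoc fun x hx y hy => ?_
  rcases isEmpty_or_nonempty α with _ | ⟨⟨a₀⟩⟩
  · exact Subsingleton.elim _ _
  · have hsocL : ∀ s ∈ socle H, s ∈ L := fun s hs =>
      hL.mem_of_forall_commute hLab a₀ fun l hl => hCsoc l (hLC hl) s hs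
    exact hLab x (hsocL x hx) y (hsocL y hy)

end Perm

variable {Ω : Type*}

section Partition

lemma conj_mem_partKernel {P : Set (Set Ω)} {x : Equiv.Perm Ω} (hx : x ∈ partKernel P)
    (g : Equiv.Perm Ω) : g * x * g⁻¹ ∈ partKernel (g • P) := by
  rintro _ ⟨b, hb, rfl⟩
  show (g * x * g⁻¹) • g • b = g • b
  rw [mul_smul, mul_smul, inv_smul_smul, hx b hb]

/-- In an `M`-normal decomposition, `M ⊓ kernelAway E P` is the direct factor of `M`
belonging to `P`. -/
def kernelAway (E : Set (Set (Set Ω))) (P : Set (Set Ω)) : Subgroup (Equiv.Perm Ω) :=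
  ⨅ Q ∈ E \ {P}, partKernel Q

variable {E : Set (Set (Set Ω))} {P : Set (Set Ω)}

lemma mem_kernelAway {x : Equiv.Perm Ω} :
    x ∈ kernelAway E P ↔ ∀ Q ∈ E, Q ≠ P → x ∈ partKernel Q := by
  simp only [kernelAway, Subgroup.mem_iInf, Set.mem_sdiff, Set.mem_singleton_iff, and_imp]

lemma conj_mem_kernelAway {x g : Equiv.Perm Ω} (hg : ∀ Q ∈ E, g⁻¹ • Q ∈ E)
    (hx : x ∈ kernelAway E P) : g * x * g⁻¹ ∈ kernelAway E (g • P) := by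
  refine mem_kernelAway.mpr fun Q hQ hQP => ?_
  have hxQ : x ∈ partKernel (g⁻¹ • Q) := mem_kernelAway.mp hx _ (hg Q hQ) (by
    rintro rfl
    exact hQP (smul_inv_smul g Q).symm)
  simpa only [smul_inv_smul] using conj_mem_partKernel hxQ g

/-- An arbitrary set unless `ω` lies in a block of `P`. -/
noncomputable def blockOf (P : Set (Set Ω)) (ω : Ω) : Set Ω :=
  Classical.epsilon fun b => b ∈ P ∧ ω ∈ b

lemma IsPartition.blockOf_mem (hP : IsPartition P) (ω : Ω) : blockOf P ω ∈ P :=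
  (Classical.epsilon_spec (hP.2 ω).exists).1

lemma IsPartition.mem_blockOf (hP : IsPartition P) (ω : Ω) : ω ∈ blockOf P ω :=
  (Classical.epsilon_spec (hP.2 ω).exists).2

end Partition

namespace IsCartesianDecompSet

variable {E : Set (Set (Set Ω))}

lemma eq_of_forall_mem_blockOf (hE : IsCartesianDecompSet E) {ω ω' : Ω}
    (h : ∀ P ∈ E, ω' ∈ blockOf P ω) : ω' = ω :=
  (hE.2.2 (blockOf · ω) fun P hP => (hE.2.1 P hP).1.blockOf_mem ω).unique h
    fun P hP => (hE.2.1 P hP).1.mem_blockOf ω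

lemma eq_one_of_forall_mem_partKernel (hE : IsCartesianDecompSet E) {x : Equiv.Perm Ω}
    (h : ∀ P ∈ E, x ∈ partKernel P) : x = 1 := by
  ext ω
  refine hE.eq_of_forall_mem_blockOf (ω := ω) fun P hP => ?_
  rw [← h P hP _ ((hE.2.1 P hP).1.blockOf_mem ω)]
  exact Set.smul_mem_smul_set ((hE.2.1 P hP).1.mem_blockOf ω)

lemma kernelAway_inf_partKernel (hE : IsCartesianDecompSet E) (P : Set (Set Ω)) :
    kernelAway E P ⊓ partKernel P = ⊥ :=
  eq_bot_iff.mpr fun x hx => Subgroup.mem_bot.mpr <|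
    hE.eq_one_of_forall_mem_partKernel fun Q hQ => by
      obtain rfl | hQP := eq_or_ne Q P
      · exact hx.2
      · exact mem_kernelAway.mp hx.1 Q hQ hQP

lemma isTransitivePerm_of_exists_smul_eq (hE : IsCartesianDecompSet E)
    {K : Subgroup (Equiv.Perm Ω)}
    (hK : ∀ Q ∈ E, ∀ b ∈ Q, ∀ b' ∈ Q, ∃ s ∈ K ⊓ kernelAway E Q, s • b = b') :
    IsTransitivePerm K := by
  intro ω ω'
  suffices ∃ r ∈ K, ∀ P ∈ E, r ω ∈ blockOf P ω' from
    this.imp fun r hr => ⟨hr.1, hE.eq_of_forall_mem_blockOf hr.2⟩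
  -- fix the coordinates of `r ω` one partition at a time
  refine Set.Finite.induction_on_subset
    (motive := fun F _ => ∃ r ∈ K, ∀ P ∈ F, r ω ∈ blockOf P ω') E hE.1 ⟨1, K.one_mem, by simp⟩ ?_
  rintro Q F hQE hFE hQF ⟨r, hr, hrF⟩
  have hQ := (hE.2.1 Q hQE).1
  obtain ⟨s, ⟨hsK, hsQ⟩, hsb⟩ := hK Q hQE _ (hQ.blockOf_mem (r ω)) _ (hQ.blockOf_mem ω')
  refine ⟨s * r, K.mul_mem hsK hr, ?_⟩
  rintro P (rfl | hP)
  · rw [← hsb]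
    exact Set.smul_mem_smul_set (hQ.mem_blockOf (r ω))
  · rw [← mem_kernelAway.mp hsQ P (hFE hP) (ne_of_mem_of_not_mem hP hQF) _
      ((hE.2.1 P (hFE hP)).1.blockOf_mem ω')]
    exact Set.smul_mem_smul_set (hrF P hP)

end IsCartesianDecompSet

section Component

variable {A B : Subgroup (Equiv.Perm Ω)} {P : Set (Set Ω)}

lemma component_eq_bot_iff (hA : A ≤ partStab P) : component A P = ⊥ ↔ A ≤ partKernel P := by
  constructor
  · intro h a ha b hb
    have hy : componentHom P ⟨a, hA ha⟩ ∈ component A P := ⟨⟨a, hA ha⟩, ha, rfl⟩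
    rw [h, Subgroup.mem_bot] at hy
    exact congrArg (fun e : Equiv.Perm P => ((e ⟨b, hb⟩ : P) : Set Ω)) hy
  · intro h
    refine eq_bot_iff.mpr ?_
    rintro _ ⟨y, hy, rfl⟩
    exact Subgroup.mem_bot.mpr (Equiv.ext fun b => Subtype.ext (h hy b b.2))

lemma isNormalIn_component (hAB : A ≤ B)
    (hconj : ∀ g ∈ B, g • P = P → ∀ a ∈ A, g * a * g⁻¹ ∈ A) :
    IsNormalIn (component A P) (component B P) := by
  refine ⟨Subgroup.map_mono fun y hy => hAB hy, ?_⟩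
  rintro _ ⟨y, hy, rfl⟩ _ ⟨z, hz, rfl⟩
  rw [← map_inv, ← map_mul, ← map_mul]
  exact ⟨y * z * y⁻¹, hconj y hy y.2 z hz, rfl⟩

lemma component_commute (h : ∀ a ∈ A, ∀ b ∈ B, Commute a b) :
    ∀ x ∈ component A P, ∀ y ∈ component B P, Commute x y := by
  rintro _ ⟨y, hy, rfl⟩ _ ⟨z, hz, rfl⟩
  exact (show Commute y z from Subtype.ext (h y hy z hz)).map (componentHom P)

lemma exists_smul_eq_of_isTransitivePerm_component (ht : IsTransitivePerm (component A P))
    {b b' : Set Ω} (hb : b ∈ P) (hb' : b' ∈ P) : ∃ a ∈ A, a • b = b' := by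
  obtain ⟨_, ⟨y, hy, rfl⟩, hyb⟩ := ht ⟨b, hb⟩ ⟨b', hb'⟩
  exact ⟨y, hy, congrArg Subtype.val hyb⟩

end Component

section BlowUp

variable {G A M : Subgroup (Equiv.Perm Ω)} {E : Set (Set (Set Ω))} {P Γ₀ : Set (Set Ω)}

lemma le_partKernel_smul (hA : ∀ g ∈ G, ∀ a ∈ A, g * a * g⁻¹ ∈ A) {g : Equiv.Perm Ω}
    (hg : g ∈ G) (h : A ≤ partKernel P) : A ≤ partKernel (g • P) := fun a ha => by
  simpa [mul_assoc] using conj_mem_partKernel (h (hA g⁻¹ (G.inv_mem hg) a ha)) g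

lemma eq_bot_of_le_partKernel (hE : IsCartesianDecompSet E) (hT : TransitiveOnDec G E)
    (hΓ₀ : Γ₀ ∈ E) (hA : ∀ g ∈ G, ∀ a ∈ A, g * a * g⁻¹ ∈ A) (h : A ≤ partKernel Γ₀) : A = ⊥ :=
  eq_bot_iff.mpr fun a ha => Subgroup.mem_bot.mpr <|
    hE.eq_one_of_forall_mem_partKernel fun P hP => by
      obtain ⟨g, hg, rfl⟩ := hT Γ₀ hΓ₀ P hP
      exact le_partKernel_smul hA hg h ha

lemma not_le_partKernel (hT : TransitiveOnDec G E) (hΓ₀ : Γ₀ ∈ E)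
    (hA : ∀ g ∈ G, ∀ a ∈ A, g * a * g⁻¹ ∈ A) (h : ¬ A ≤ partKernel Γ₀) (hP : P ∈ E) :
    ¬ A ≤ partKernel P := fun hAP => by
  obtain ⟨g, hg, rfl⟩ := hT P hP Γ₀ hΓ₀
  exact h (le_partKernel_smul hA hg hAP)

lemma IsNormalDecompSet.iSup_inf_kernelAway (hM : IsNormalDecompSet M E) :
    ⨆ P ∈ E, M ⊓ kernelAway E P = M := by
  obtain ⟨-, N, -, -, hNM, -, hker⟩ := hM
  have hN : ∀ P ∈ E, N P ≤ M ⊓ kernelAway E P := fun P hP =>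
    le_inf (hNM ▸ le_iSup₂ (f := fun P (_ : P ∈ E) => N P) P hP) fun x hx =>
      mem_kernelAway.mpr fun Q hQ hQP =>
        ((hker Q hQ).ge
          (le_iSup₂ (f := fun R (_ : R ∈ E \ {Q}) => N R) P ⟨hP, hQP.symm⟩ hx)).2
  refine le_antisymm (iSup₂_le fun _ _ => inf_le_left) ?_
  calc M = ⨆ P ∈ E, N P := hNM.symm
    _ ≤ ⨆ P ∈ E, M ⊓ kernelAway E P := iSup₂_mono hN

lemma le_partKernel_of_inf_partKernel_le (hM : ⨆ R ∈ E, M ⊓ kernelAway E R = M)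
    {Q : Set (Set Ω)} (hP : P ∈ E) (hQ : Q ∈ E) (hPQ : P ≠ Q)
    (h : M ⊓ partKernel P ≤ partKernel Q) :
    M ≤ partKernel Q := by
  rw [← hM]
  refine iSup₂_le fun R _ x hx => ?_
  obtain rfl | hRQ := eq_or_ne R Q
  · exact h ⟨hx.1, mem_kernelAway.mp hx.2 P hP hPQ⟩
  · exact mem_kernelAway.mp hx.2 Q hQ hRQ.symm

lemma smul_eq_self_of_forall_commute (hM : ⨆ R ∈ E, M ⊓ kernelAway E R = M)
    {g : Equiv.Perm Ω} (hP : P ∈ E) (hgP : g • P ∈ E) (hMgP : ¬ M ≤ partKernel (g • P))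
    (hg : ∀ m ∈ M, Commute g m) : g • P = P := by
  by_contra hne
  refine hMgP (le_partKernel_of_inf_partKernel_le hM hP hgP (Ne.symm hne) fun x hx => ?_)
  simpa [(hg x hx.1).eq] using conj_mem_partKernel hx.2 g

lemma forall_commute_of_inf_kernelAway_eq_bot (hM : ⨆ P ∈ E, M ⊓ kernelAway E P = M)
    (hAE : ∀ a ∈ A, ∀ P ∈ E, a • P = P) (hMA : ∀ m ∈ M, ∀ a ∈ A, m * a * m⁻¹ ∈ A)
    (h : ∀ P ∈ E, A ⊓ kernelAway E P = ⊥) : ∀ a ∈ A, ∀ m ∈ M, Commute a m := by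
  suffices M ≤ Subgroup.centralizer A from
    fun a ha m hm => Subgroup.mem_centralizer_iff.mp (this hm) a ha
  rw [← hM]
  refine iSup₂_le fun P hP x hx => Subgroup.mem_centralizer_iff.mpr fun a ha =>
    commute_of_inf_eq_bot (h P hP) ha hx.2 ?_ (hMA x hx.1 a ha)
  refine mem_kernelAway.mpr fun Q hQ hQP => ?_
  simpa [hAE a ha Q hQ] using conj_mem_partKernel (mem_kernelAway.mp hx.2 Q hQ hQP) a

lemma conj_mem_inf_kernelAway (hInv : InvariantDec G E)
    (hA : ∀ g ∈ G, ∀ a ∈ A, g * a * g⁻¹ ∈ A) {g x : Equiv.Perm Ω} (hg : g ∈ G)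
    (hx : x ∈ A ⊓ kernelAway E P) :
    g * x * g⁻¹ ∈ A ⊓ kernelAway E (g • P) :=
  ⟨hA g hg x hx.1, conj_mem_kernelAway (fun Q hQ => hInv g⁻¹ (G.inv_mem hg) Q hQ) hx.2⟩

lemma inf_kernelAway_eq_bot (hInv : InvariantDec G E) (hT : TransitiveOnDec G E)
    (hA : ∀ g ∈ G, ∀ a ∈ A, g * a * g⁻¹ ∈ A) (hΓ₀ : Γ₀ ∈ E) (h : A ⊓ kernelAway E Γ₀ = ⊥)
    (hP : P ∈ E) : A ⊓ kernelAway E P = ⊥ := by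
  obtain ⟨g, hg, rfl⟩ := hT Γ₀ hΓ₀ P hP
  refine eq_bot_iff.mpr fun x hx => Subgroup.mem_bot.mpr (conj_eq_one_iff (a := g⁻¹).mp ?_)
  have := conj_mem_inf_kernelAway hInv hA (G.inv_mem hg) hx
  rwa [inv_smul_smul, h, Subgroup.mem_bot] at this

lemma isTransitivePerm_or_inf_kernelAway_eq_bot [Finite Ω] (hE : IsCartesianDecompSet E)
    (hInv : InvariantDec G E) (hT : TransitiveOnDec G E) (hΓ₀ : Γ₀ ∈ E)
    (hqp : IsQuasiprimitivePerm (component G Γ₀)) (hA : IsNormalIn A G)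
    (hAΓ₀ : A ≤ partStab Γ₀) :
    IsTransitivePerm A ∨ A ⊓ kernelAway E Γ₀ = ⊥ := by
  by_cases hbot : component (A ⊓ kernelAway E Γ₀) Γ₀ = ⊥
  · rw [component_eq_bot_iff (inf_le_left.trans hAΓ₀)] at hbot
    exact .inr <| eq_bot_iff.mpr fun x hx =>
      (hE.kernelAway_inf_partKernel Γ₀).le ⟨hx.2, hbot hx⟩
  have ht := hqp.2 _ (isNormalIn_component (inf_le_left.trans hA.1) fun g hg hgΓ₀ _ ha =>
    hgΓ₀ ▸ conj_mem_inf_kernelAway hInv hA.2 hg ha) hbot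
  refine .inl (hE.isTransitivePerm_of_exists_smul_eq fun Q hQ b hb b' hb' => ?_)
  obtain ⟨g, hg, rfl⟩ := hT Γ₀ hΓ₀ Q hQ
  obtain ⟨s, hs, hsb⟩ := exists_smul_eq_of_isTransitivePerm_component ht
    (Set.mem_smul_set_iff_inv_smul_mem.mp hb) (Set.mem_smul_set_iff_inv_smul_mem.mp hb')
  exact ⟨g * s * g⁻¹, conj_mem_inf_kernelAway hInv hA.2 hg hs, by simp [mul_smul, hsb]⟩

lemma eq_bot_of_forall_commute [Finite Ω] (hE : IsCartesianDecompSet E)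
    (hT : TransitiveOnDec G E) (hΓ₀ : Γ₀ ∈ E) (hqp : IsQuasiprimitivePerm (component G Γ₀))
    (hsoc : ¬ ∀ x ∈ socle (component G Γ₀), ∀ y ∈ socle (component G Γ₀), x * y = y * x)
    (hMsoc : component M Γ₀ = socle (component G Γ₀)) (hA : IsNormalIn A G)
    (hAΓ₀ : A ≤ partStab Γ₀) (hAM : ∀ a ∈ A, ∀ m ∈ M, Commute a m) : A = ⊥ := by
  refine eq_bot_of_le_partKernel hE hT hΓ₀ hA.2 ((component_eq_bot_iff hAΓ₀).mp ?_)
  refine hqp.eq_bot_of_forall_commute_socle hsoc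
    (isNormalIn_component hA.1 fun g hg _ a ha => hA.2 g hg a ha) ?_
  rw [← hMsoc]
  exact component_commute hAM

end BlowUp

end QP

open QP

/-- If E is a blow-up decomposition for G and some component G^{Γ₀} is
quasiprimitive with non-abelian socle, then G is quasiprimitive. -/
theorem blowup_component_quasiprimitive_implies_quasiprimitive
    {Ω : Type*} [Finite Ω]
    (G : Subgroup (Equiv.Perm Ω)) (E : Set (Set (Set Ω)))
    (hE : QP.IsBlowUpDecomp G E)
    (Γ₀ : Set (Set Ω)) (hΓ₀ : Γ₀ ∈ E)
    (hcomp : QP.IsQuasiprimitivePerm (QP.component G Γ₀))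
    (hnonab : ¬ ∀ x ∈ QP.socle (QP.component G Γ₀),
        ∀ y ∈ QP.socle (QP.component G Γ₀), x * y = y * x) :
    QP.IsQuasiprimitivePerm G := by
  obtain ⟨hE, hInv, hT, M, hMG, hM, hMdec, hMsoc⟩ := hE
  have hMsup := hMdec.iSup_inf_kernelAway
  have hMΓ₀ : M ≤ partStab Γ₀ := fun m hm => hMdec.1 m hm Γ₀ hΓ₀
  have hMker : ∀ P ∈ E, ¬ M ≤ partKernel P := fun P hP => by
    refine not_le_partKernel hT hΓ₀ hMG.2 ?_ hP
    rw [← component_eq_bot_iff hMΓ₀, hMsoc Γ₀ hΓ₀]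
    exact ne_bot_of_not_forall_commute hnonab
  have hcentral := fun A => eq_bot_of_forall_commute (A := A) hE hT hΓ₀ hcomp hnonab (hMsoc Γ₀ hΓ₀)
  refine ⟨hM.mono hMG.1, fun K hK hK1 => ?_⟩
  have hR : IsNormalIn (K ⊓ M) G := hK.inf hMG
  have hRΓ₀ : K ⊓ M ≤ partStab Γ₀ := inf_le_right.trans hMΓ₀
  refine (isTransitivePerm_or_inf_kernelAway_eq_bot hE hInv hT hΓ₀ hcomp hR hRΓ₀).elim
    (fun hRt => hRt.mono inf_le_left) fun hR0 => absurd ?_ hK1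
  have hRM : K ⊓ M = ⊥ := hcentral _ hR hRΓ₀ <|
    forall_commute_of_inf_kernelAway_eq_bot hMsup (fun r hr P hP => hMdec.1 r hr.2 P hP)
      (fun m hm r hr => hR.2 m (hMG.1 hm) r hr)
      fun P hP => inf_kernelAway_eq_bot hInv hT hR.2 hΓ₀ hR0 hP
  have hKM : ∀ k ∈ K, ∀ m ∈ M, Commute k m := fun k hk m hm =>
    commute_of_inf_eq_bot hRM hk hm (hMG.2 k (hK.1 hk) m hm) (hK.2 m (hMG.1 hm) k hk)
  exact hcentral K hK (fun k hk => smul_eq_self_of_forall_commute hMsup hΓ₀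
    (hInv k (hK.1 hk) Γ₀ hΓ₀) (hMker _ (hInv k (hK.1 hk) Γ₀ hΓ₀)) (hKM k hk)) hKM
end

section
/- Let H = ⟨(1 2 3)⟩ ≤ Sym({1,2,3}) and let G = H wr D₈ act in product action on {1,2,3}⁴, where D₈ ≤ Sym(4) is the dihedral group of order 8 preserving the block system {{1,2},{3,4}}. Then G has exactly three minimal normal subgroups, namely M₁ = {(x,x,x,x) : x ∈ H}, M₂ = {(x,x,x²,x²) : x ∈ H}, and M₃ = {(x,x²,y,y²) : x,y ∈ H}; in particular G is not quasiprimitive on {1,2,3}⁴ even though each component G^Γ = H is quasiprimitive. -/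
open scoped Pointwise

namespace QP

section Wreath

variable (K : Type*) [Group K] (ℓ : ℕ)

/-- The coordinate-permuting action of `Sym(ℓ)` on `K^ℓ`, as automorphisms. -/
def permCoord : Equiv.Perm (Fin ℓ) →* MulAut (Fin ℓ → K) where
  toFun σ :=
    { toFun := fun f => f ∘ σ.symm
      invFun := fun f => f ∘ σ
      left_inv := fun f => by funext i; simp
      right_inv := fun f => by funext i; simp
      map_mul' := fun f g => rfl }
  map_one' := by
    apply MulEquiv.ext; intro f; rfl
  map_mul' := by
    intro σ τ
    apply MulEquiv.ext; intro f; rfl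

/-- The wreath product `K wr Sym(ℓ) = K^ℓ ⋊ Sym(ℓ)`. -/
abbrev WreathProduct := (Fin ℓ → K) ⋊[permCoord K ℓ] Equiv.Perm (Fin ℓ)

variable (Γ : Type*) [MulAction K Γ]

/-- The product action of the wreath product `K wr Sym(ℓ)` on `Γ^ℓ`,
where `K` acts on `Γ`. -/
def prodAction : WreathProduct K ℓ →* Equiv.Perm (Fin ℓ → Γ) where
  toFun w :=
    { toFun := fun v i => w.left i • v (w.right.symm i)
      invFun := fun v i => (w.left (w.right i))⁻¹ • v (w.right i)
      left_inv := fun v => by funext i; simp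
      right_inv := fun v => by funext i; simp }
  map_one' := by
    apply Equiv.ext; intro v; funext i; simp; rfl
  map_mul' := by
    intro w₁ w₂
    apply Equiv.ext; intro v; funext i
    simp only [SemidirectProduct.mul_left, SemidirectProduct.mul_right, Pi.mul_apply,
      mul_smul, permCoord, MonoidHom.coe_mk, OneHom.coe_mk, MulEquiv.coe_mk,
      Equiv.coe_fn_mk, Function.comp_apply, Equiv.coe_fn_symm_mk, Equiv.Perm.mul_def,
      Equiv.symm_trans_apply, Equiv.trans_apply]

end Wreath

section Reg

variable (Λ : Type*) [Group Λ]

/-- The right regular representation of a group. -/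
def rightReg : Λ →* Equiv.Perm Λ :=
  MonoidHom.mk' (fun g => Equiv.mulRight g⁻¹) (by
    intro a b; ext x; simp [mul_assoc])

/-- The left regular representation of a group. -/
def leftReg : Λ →* Equiv.Perm Λ :=
  MonoidHom.mk' (fun g => Equiv.mulLeft g) (by
    intro a b; ext x; simp [mul_assoc])

/-- The diagonal embedding of `K` into `K^ℓ`. -/
def constHom (K : Type*) [Group K] (ℓ : ℕ) : K →* (Fin ℓ → K) :=
  MonoidHom.mk' (fun h => fun _ => h) (fun _ _ => rfl)

end Reg

section Sub

variable {Γ : Type*} (H : Subgroup (Equiv.Perm Γ)) (ℓ : ℕ)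

/-- The product action of `H wr Sym(ℓ)` on `Γ^ℓ`, for `H ≤ Sym(Γ)`. -/
def wrAction : WreathProduct ↥H ℓ →* Equiv.Perm (Fin ℓ → Γ) :=
  prodAction ↥H ℓ Γ

/-- The subgroup `A^ℓ` of the base group of `H wr Sym(ℓ)`, for `A ≤ H`. -/
def baseSub (A : Subgroup (Equiv.Perm Γ)) : Subgroup (WreathProduct ↥H ℓ) :=
  Subgroup.map SemidirectProduct.inl (Subgroup.pi Set.univ fun _ => A.subgroupOf H)

/-- The diagonal copy `Hδ` of `H` in the base group of `H wr Sym(ℓ)`. -/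
def diagSub : Subgroup (WreathProduct ↥H ℓ) :=
  (SemidirectProduct.inl.comp (constHom ↥H ℓ)).range

/-- The top group `Sym(ℓ)` of `H wr Sym(ℓ)`. -/
def topSub : Subgroup (WreathProduct ↥H ℓ) :=
  SemidirectProduct.inr.range

end Sub

end QP

namespace Ex14

/-- The 3-cycle (1 2 3). -/
def c : Equiv.Perm (Fin 3) := finRotate 3

/-- H = ⟨(1 2 3)⟩ ≤ Sym({1,2,3}). -/
def H : Subgroup (Equiv.Perm (Fin 3)) := Subgroup.zpowers c

def zc : ↥H := ⟨c, Subgroup.mem_zpowers c⟩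

/-- D₈ ≤ Sym(4): the (dihedral, of order 8) stabiliser of the
block system {{1,2},{3,4}}. -/
def D : Subgroup (Equiv.Perm (Fin 4)) :=
  MulAction.stabilizer (Equiv.Perm (Fin 4)) ({{0, 1}, {2, 3}} : Set (Set (Fin 4)))

/-- The product action of H wr Sym(4) on {1,2,3}⁴. -/
def ψ : QP.WreathProduct ↥H 4 →* Equiv.Perm (Fin 4 → Fin 3) := QP.wrAction H 4

/-- G = H wr D₈ in product action on {1,2,3}⁴. -/
def G : Subgroup (Equiv.Perm (Fin 4 → Fin 3)) :=
  Subgroup.map ψ (Subgroup.comap SemidirectProduct.rightHom D)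

/-- M₁ = {(x,x,x,x) : x ∈ H}. -/
def M₁ : Subgroup (Equiv.Perm (Fin 4 → Fin 3)) :=
  Subgroup.closure {ψ (SemidirectProduct.inl fun _ => zc)}

/-- M₂ = {(x,x,x²,x²) : x ∈ H}  (note x² = x⁻¹ in H). -/
def M₂ : Subgroup (Equiv.Perm (Fin 4 → Fin 3)) :=
  Subgroup.closure {ψ (SemidirectProduct.inl ![zc, zc, zc⁻¹, zc⁻¹])}

/-- M₃ = {(x,x²,y,y²) : x, y ∈ H}. -/
def M₃ : Subgroup (Equiv.Perm (Fin 4 → Fin 3)) :=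
  Subgroup.closure
    {ψ (SemidirectProduct.inl ![zc, zc⁻¹, 1, 1]),
     ψ (SemidirectProduct.inl ![1, 1, zc, zc⁻¹])}

/-- The natural Cartesian decomposition of {1,2,3}⁴: the i-th partition consists
of the fibres of the i-th coordinate. -/
def coordPart (i : Fin 4) : Set (Set (Fin 4 → Fin 3)) :=
  {b | ∃ γ : Fin 3, b = {v : Fin 4 → Fin 3 | v i = γ}}

end Ex14

/-!
`G` is the affine group `V ⋊ D₈` of `V = 𝔽₃⁴`: an element acts as `v ↦ n + v ∘ σ⁻¹` with
`σ ∈ D₈`. A nontrivial normal subgroup `K` contains a nonzero translation (the commutator of a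
non-translation with a suitable translation), and the translation vectors of `K` form a
`D₈`-invariant subgroup of `V`. Such a subgroup containing `n ≠ 0` contains `W₃ = {(x,-x,y,-y)}`
when `n ∈ W₃`; otherwise `m = n + n ∘ (0 1)(2 3)` has the form `(a,a,b,b) ≠ 0`, and
`m ± m ∘ (0 2)(1 3)` is a nonzero multiple of `(1,1,1,1)` or of `(1,1,-1,-1)`. So every
nontrivial normal subgroup contains one of the pairwise incomparable `M₁`, `M₂`, `M₃`, which are
therefore exactly the minimal normal subgroups. `M₁` is intransitive, while on each coordinate
partition `G` induces the regular cyclic group of order 3.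
-/

namespace QP

open Equiv

section Translations

variable {ι A : Type*}

def coordPerm (σ : Perm ι) : Perm (ι → A) := σ.arrowCongr (Equiv.refl A)

@[simp] lemma coordPerm_apply (σ : Perm ι) (v : ι → A) : coordPerm σ v = v ∘ σ.symm := rfl

@[simp] lemma coordPerm_one : coordPerm (1 : Perm ι) = (1 : Perm (ι → A)) := rfl

variable [AddCommGroup A]

lemma conj_addLeft (n m : ι → A) (σ : Perm ι) :
    Equiv.addLeft n * coordPerm σ * Equiv.addLeft m * (Equiv.addLeft n * coordPerm σ)⁻¹ =
      Equiv.addLeft (m ∘ σ.symm) := by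
  rw [eq_comm, eq_mul_inv_iff_mul_eq]
  ext v i
  simp only [Perm.mul_apply, coordPerm_apply, coe_addLeft, Function.comp_apply, Pi.add_apply]
  abel

lemma inv_mul_commutator_addLeft (n m : ι → A) (σ : Perm ι) :
    (Equiv.addLeft n * coordPerm σ)⁻¹ *
        (Equiv.addLeft m * (Equiv.addLeft n * coordPerm σ) * (Equiv.addLeft m)⁻¹) =
      Equiv.addLeft (m ∘ σ - m) := by
  rw [inv_mul_eq_iff_eq_mul, neg_addLeft]
  ext v i
  simp only [Perm.mul_apply, coordPerm_apply, coe_addLeft, Function.comp_apply, Pi.add_apply,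
    Pi.sub_apply, Pi.neg_apply, apply_symm_apply]
  abel

end Translations

section TranslationSubgroups

variable {V : Type*} [AddGroup V]

lemma addLeft_injective : Function.Injective (Equiv.addLeft : V → Perm V) := fun a b h => by
  simpa [Equiv.coe_addLeft] using Equiv.ext_iff.1 h 0

def translations (W : AddSubgroup V) : Subgroup (Perm V) where
  carrier := Equiv.addLeft '' W
  mul_mem' := by
    rintro _ _ ⟨a, ha, rfl⟩ ⟨b, hb, rfl⟩
    exact ⟨a + b, W.add_mem ha hb, addLeft_add a b⟩
  one_mem' := ⟨0, W.zero_mem, addLeft_zero⟩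
  inv_mem' := by
    rintro _ ⟨a, ha, rfl⟩
    exact ⟨-a, W.neg_mem ha, (neg_addLeft a).symm⟩

lemma addLeft_mem_translations {W : AddSubgroup V} {w : V} :
    Equiv.addLeft w ∈ translations W ↔ w ∈ W :=
  addLeft_injective.mem_set_image

def translationVectors (K : Subgroup (Perm V)) : AddSubgroup V where
  carrier := {m | Equiv.addLeft m ∈ K}
  add_mem' {a b} (ha : Equiv.addLeft a ∈ K) (hb : Equiv.addLeft b ∈ K) :=
    show Equiv.addLeft (a + b) ∈ K from addLeft_add a b ▸ K.mul_mem ha hb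
  zero_mem' := show Equiv.addLeft 0 ∈ K from addLeft_zero (α := V) ▸ K.one_mem
  neg_mem' {a} (ha : Equiv.addLeft a ∈ K) :=
    show Equiv.addLeft (-a) ∈ K from neg_addLeft a ▸ K.inv_mem ha

lemma mem_translationVectors {K : Subgroup (Perm V)} {m : V} :
    m ∈ translationVectors K ↔ Equiv.addLeft m ∈ K := Iff.rfl

lemma translations_le_iff {W : AddSubgroup V} {K : Subgroup (Perm V)} :
    translations W ≤ K ↔ W ≤ translationVectors K :=
  ⟨fun h _ hw => h ⟨_, hw, rfl⟩, fun h _ ⟨_, hw, hg⟩ => hg ▸ h hw⟩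

lemma closure_image_addLeft (S : Set V) :
    Subgroup.closure (Equiv.addLeft '' S) = translations (AddSubgroup.closure S) := by
  refine le_antisymm ?_ ?_
  · exact (Subgroup.closure_le _).2 (Set.image_mono AddSubgroup.subset_closure)
  · rw [translations_le_iff, AddSubgroup.closure_le]
    exact fun s hs => Subgroup.subset_closure ⟨s, hs, rfl⟩

end TranslationSubgroups

section MinimalNormal

variable {X : Type*} [Group X] {G : Subgroup X} {𝒩 : Set (Subgroup X)}

lemma isMinimalNormalIn_of_forall_exists_le
    (hcover : ∀ K, IsNormalIn K G → K ≠ ⊥ → ∃ N ∈ 𝒩, N ≤ K)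
    (hanti : ∀ N ∈ 𝒩, ∀ N' ∈ 𝒩, N' ≤ N → N' = N)
    {N : Subgroup X} (hN𝒩 : N ∈ 𝒩) (hN : IsNormalIn N G) (hN0 : N ≠ ⊥) :
    IsMinimalNormalIn N G := by
  refine ⟨hN, hN0, fun K hK hK0 hKN => le_antisymm hKN ?_⟩
  obtain ⟨N', hN'𝒩, hN'K⟩ := hcover K hK hK0
  exact hanti N hN𝒩 N' hN'𝒩 (hN'K.trans hKN) ▸ hN'K

lemma mem_of_isMinimalNormalIn
    (hcover : ∀ K, IsNormalIn K G → K ≠ ⊥ → ∃ N ∈ 𝒩, N ≤ K)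
    (h𝒩 : ∀ N ∈ 𝒩, IsNormalIn N G ∧ N ≠ ⊥)
    {K : Subgroup X} (hK : IsMinimalNormalIn K G) : K ∈ 𝒩 := by
  obtain ⟨N, hN𝒩, hNK⟩ := hcover K hK.1 hK.2.1
  rwa [← hK.2.2 N (h𝒩 N hN𝒩).1 (h𝒩 N hN𝒩).2 hNK]

end MinimalNormal

lemma isTransitivePerm_of_shift {α : Type*} {N : Subgroup (Perm α)} {f : Fin 3 → α}
    (hf : Function.Surjective f) {x : Perm α} (hx : x ∈ N) {k : Fin 3} (hk : k ≠ 0)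
    (hxf : ∀ γ, x (f γ) = f (k + γ)) : IsTransitivePerm N := by
  have hreach : ∀ k : Fin 3, k ≠ 0 → ∀ γ δ : Fin 3, ∃ j : Fin 3, j.val • k + γ = δ := by
    decide
  have hpow : ∀ γ (j : ℕ), (x ^ j) (f γ) = f (j • k + γ) := by
    intro γ j
    induction j with
    | zero => simp
    | succ j ih => rw [pow_succ', Perm.mul_apply, ih, hxf, succ_nsmul', add_assoc]
  rintro a b
  obtain ⟨γ, rfl⟩ := hf a
  obtain ⟨δ, rfl⟩ := hf b
  obtain ⟨j, hj⟩ := hreach k hk γ δ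
  exact ⟨x ^ j.val, pow_mem hx _, hj ▸ hpow γ j⟩

end QP

namespace Ex14

open Equiv QP

abbrev V := Fin 4 → Fin 3

lemma c_eq_addLeft : c = Equiv.addLeft 1 := by decide

lemma eq_addLeft_of_mem_H {h : Perm (Fin 3)} (hh : h ∈ H) : h = Equiv.addLeft (h 0) := by
  obtain ⟨k, rfl⟩ := hh
  simp only [c_eq_addLeft, zsmul_addLeft]
  simp

lemma addLeft_mem_H (a : Fin 3) : Equiv.addLeft a ∈ H := by
  have : Equiv.addLeft a = c ^ a.val := by
    rw [c_eq_addLeft, nsmul_addLeft]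
    revert a; decide
  exact this ▸ pow_mem (Subgroup.mem_zpowers c) _

lemma ψ_eq (w : WreathProduct H 4) :
    ψ w = Equiv.addLeft (fun i => (w.left i : Perm (Fin 3)) 0) * coordPerm w.right := by
  refine Equiv.ext fun v => funext fun i => ?_
  change (w.left i : Perm (Fin 3)) (v (w.right.symm i)) = _
  rw [eq_addLeft_of_mem_H (w.left i).2]
  rfl

lemma mem_G_iff {g : Perm V} :
    g ∈ G ↔ ∃ n, ∃ σ ∈ D, g = Equiv.addLeft n * coordPerm σ := by
  constructor
  · rintro ⟨w, hw, rfl⟩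
    exact ⟨_, w.right, hw, ψ_eq w⟩
  · rintro ⟨n, σ, hσ, rfl⟩
    refine ⟨⟨fun i => ⟨Equiv.addLeft (n i), addLeft_mem_H (n i)⟩, σ⟩, hσ, ?_⟩
    rw [ψ_eq]
    simp

lemma addLeft_mem_G (n : V) : Equiv.addLeft n ∈ G :=
  mem_G_iff.2 ⟨n, 1, D.one_mem, by simp⟩

lemma ψ_inl (f : Fin 4 → H) :
    ψ (SemidirectProduct.inl f) = Equiv.addLeft (fun i => (f i : Perm (Fin 3)) 0) := by
  simp [ψ_eq]

def partner : Perm (Fin 4) := swap 0 1 * swap 2 3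

lemma mem_D_iff {σ : Perm (Fin 4)} : σ ∈ D ↔ σ * partner = partner * σ := by
  rw [D, MulAction.mem_stabilizer_iff, Set.smul_set_insert, Set.smul_set_singleton,
    Set.smul_set_insert, Set.smul_set_singleton, Set.smul_set_insert, Set.smul_set_singleton]
  simp only [Set.pair_eq_pair_iff, Perm.smul_def]
  revert σ
  decide

lemma partner_mem_D : partner ∈ D := mem_D_iff.2 rfl

lemma comp_partner_comm {σ : Perm (Fin 4)} (hσ : σ ∈ D) (m : V) :
    (m ∘ σ) ∘ partner = (m ∘ partner) ∘ σ := by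
  change m ∘ ⇑(σ * partner) = m ∘ ⇑(partner * σ)
  rw [mem_D_iff.1 hσ]

def IsInvariant (W : AddSubgroup V) : Prop := ∀ σ ∈ D, ∀ m ∈ W, m ∘ σ ∈ W

/- The translation vectors of `M₁`, `M₂`, `M₃`, cut out by equations that are visibly invariant
under the centraliser `D` of `partner`. -/
def W₁ : AddSubgroup V where
  carrier := {m | ∀ i, m i = m 0}
  add_mem' {a b} ha hb i := by simp only [Pi.add_apply, ha i, hb i]
  zero_mem' _ := rfl
  neg_mem' {a} ha i := by simp only [Pi.neg_apply, ha i]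

def W₂ : AddSubgroup V where
  carrier := {m | m ∘ partner = m ∧ ∑ i, m i = 0}
  add_mem' {a b} ha hb := ⟨by rw [Pi.add_comp, ha.1, hb.1], by
    simp only [Pi.add_apply, Finset.sum_add_distrib, ha.2, hb.2, add_zero]⟩
  zero_mem' := ⟨rfl, by simp⟩
  neg_mem' {a} ha := ⟨by rw [Pi.neg_comp, ha.1], by simp [ha.2]⟩

def W₃ : AddSubgroup V where
  carrier := {m | m ∘ partner = -m}
  add_mem' {a b} (ha : a ∘ partner = -a) (hb : b ∘ partner = -b) :=
    show (a + b) ∘ partner = -(a + b) by rw [Pi.add_comp, ha, hb, neg_add]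
  zero_mem' := neg_zero.symm
  neg_mem' {a} (ha : a ∘ partner = -a) := show (-a) ∘ partner = - -a by rw [Pi.neg_comp, ha]

instance : DecidablePred (· ∈ W₁) := fun m => inferInstanceAs (Decidable (∀ i, m i = m 0))
instance : DecidablePred (· ∈ W₂) := fun m =>
  inferInstanceAs (Decidable (m ∘ partner = m ∧ ∑ i, m i = 0))
instance : DecidablePred (· ∈ W₃) := fun m => inferInstanceAs (Decidable (m ∘ partner = -m))

lemma isInvariant_W₁ : IsInvariant W₁ :=
  fun σ _ _ hm i => (hm (σ i)).trans (hm (σ 0)).symm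

lemma isInvariant_W₂ : IsInvariant W₂ :=
  fun σ hσ m hm => ⟨by rw [comp_partner_comm hσ, hm.1], (Equiv.sum_comp σ m).trans hm.2⟩

lemma isInvariant_W₃ : IsInvariant W₃ := fun σ hσ m (hm : m ∘ partner = -m) =>
  show (m ∘ σ) ∘ partner = -(m ∘ σ) by rw [comp_partner_comm hσ, hm, Pi.neg_comp]

lemma W₁_eq_closure : W₁ = AddSubgroup.closure {![1, 1, 1, 1]} := by
  have key : ∀ m ∈ W₁, m = (m 0).val • ![1, 1, 1, 1] := by decide
  refine le_antisymm (fun m hm => ?_) ((AddSubgroup.closure_le _).2 (by simp; decide))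
  rw [key m hm]
  exact nsmul_mem (AddSubgroup.subset_closure (Set.mem_singleton _)) _

lemma W₂_eq_closure : W₂ = AddSubgroup.closure {![1, 1, 2, 2]} := by
  have key : ∀ m ∈ W₂, m = (m 0).val • ![1, 1, 2, 2] := by decide
  refine le_antisymm (fun m hm => ?_) ((AddSubgroup.closure_le _).2 (by simp; decide))
  rw [key m hm]
  exact nsmul_mem (AddSubgroup.subset_closure (Set.mem_singleton _)) _

lemma W₃_eq_closure : W₃ = AddSubgroup.closure {![1, 2, 0, 0], ![0, 0, 1, 2]} := by
  have key : ∀ m ∈ W₃, m = (m 0).val • ![1, 2, 0, 0] + (m 2).val • ![0, 0, 1, 2] := by decide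
  refine le_antisymm (fun m hm => ?_) ((AddSubgroup.closure_le _).2 ?_)
  · rw [key m hm]
    exact add_mem (nsmul_mem (AddSubgroup.subset_closure (Set.mem_insert _ _)) _)
      (nsmul_mem (AddSubgroup.subset_closure (Set.mem_insert_of_mem _ (Set.mem_singleton _))) _)
  · simp only [Set.insert_subset_iff, Set.singleton_subset_iff, SetLike.mem_coe]
    decide

lemma M₁_eq : M₁ = translations W₁ := by
  rw [M₁, ψ_inl, show (fun i => ((fun _ => zc) i : Perm (Fin 3)) 0) = ![1, 1, 1, 1] by decide,
    ← Set.image_singleton, closure_image_addLeft, W₁_eq_closure]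

lemma M₂_eq : M₂ = translations W₂ := by
  rw [M₂, ψ_inl, show (fun i => (![zc, zc, zc⁻¹, zc⁻¹] i : Perm (Fin 3)) 0) = ![1, 1, 2, 2] by
    decide, ← Set.image_singleton, closure_image_addLeft, W₂_eq_closure]

lemma M₃_eq : M₃ = translations W₃ := by
  rw [M₃, ψ_inl, ψ_inl,
    show (fun i => (![zc, zc⁻¹, 1, 1] i : Perm (Fin 3)) 0) = ![1, 2, 0, 0] by decide,
    show (fun i => (![1, 1, zc, zc⁻¹] i : Perm (Fin 3)) 0) = ![0, 0, 1, 2] by decide,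
    ← Set.image_pair, closure_image_addLeft, W₃_eq_closure]

lemma isNormalIn_translations {W : AddSubgroup V} (hW : IsInvariant W) :
    IsNormalIn (translations W) G := by
  refine ⟨fun g ⟨w, _, hg⟩ => hg ▸ addLeft_mem_G w, ?_⟩
  rintro g hg _ ⟨m, hm, rfl⟩
  obtain ⟨n, σ, hσ, rfl⟩ := mem_G_iff.1 hg
  rw [conj_addLeft]
  exact ⟨_, hW _ (D.inv_mem hσ) m hm, rfl⟩

lemma isInvariant_translationVectors {K : Subgroup (Perm V)} (hK : IsNormalIn K G) :
    IsInvariant (translationVectors K) := by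
  intro σ hσ m hm
  have h := hK.2 _ (mem_G_iff.2 ⟨0, σ⁻¹, D.inv_mem hσ, rfl⟩) _ hm
  rwa [conj_addLeft] at h

lemma exists_ne_zero_mem_translationVectors {K : Subgroup (Perm V)} (hK : IsNormalIn K G)
    (hK0 : K ≠ ⊥) : ∃ m ∈ translationVectors K, m ≠ 0 := by
  obtain ⟨g, hgK, hg1⟩ := K.bot_or_exists_ne_one.resolve_left hK0
  obtain ⟨n, σ, -, rfl⟩ := mem_G_iff.1 (hK.1 hgK)
  by_cases hσ : σ = 1
  · subst hσ
    refine ⟨n, by simpa [mem_translationVectors] using hgK, fun hn => hg1 (by simp [hn])⟩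
  obtain ⟨i, hi⟩ : ∃ i, σ i ≠ i := by
    by_contra! h
    exact hσ (Equiv.ext h)
  let m : V := Pi.single (σ i) 1
  refine ⟨m ∘ σ - m, ?_, fun h => ?_⟩
  · rw [mem_translationVectors, ← inv_mul_commutator_addLeft n m σ]
    exact K.mul_mem (K.inv_mem hgK) (hK.2 _ (addLeft_mem_G m) _ hgK)
  · have := congrFun h i
    simp [m, hi.symm] at this

lemma mem_of_smul_mem {W : AddSubgroup V} {a : Fin 3} (ha : a ≠ 0) {v : V} (h : a • v ∈ W) :
    v ∈ W := by
  have key : ∀ a : Fin 3, a ≠ 0 → ∀ v : V, v = a.val • a • v := by decide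
  exact key a ha v ▸ nsmul_mem h _

def blockSwap : Perm (Fin 4) := swap 0 2 * swap 1 3

lemma swap_mem_D : swap 0 1 ∈ D := mem_D_iff.2 (by decide)

lemma blockSwap_mem_D : blockSwap ∈ D := mem_D_iff.2 (by decide)

section InvariantSubgroup

variable {W : AddSubgroup V}

lemma W₃_le_of_mem (hW : IsInvariant W) {n : V} (hn : n ∈ W) (hn0 : n ≠ 0) (hnW₃ : n ∈ W₃) :
    W₃ ≤ W := by
  have hswap : ∀ v ∈ W, v ∘ blockSwap ∈ W := hW _ blockSwap_mem_D
  suffices h : ![1, 2, 0, 0] ∈ W by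
    rw [W₃_eq_closure, AddSubgroup.closure_le, Set.insert_subset_iff, Set.singleton_subset_iff]
    exact ⟨h, (by decide : (![1, 2, 0, 0] : V) ∘ blockSwap = ![0, 0, 1, 2]) ▸ hswap _ h⟩
  by_cases h0 : n 0 = 0
  · have key : ∀ n ∈ W₃, n 0 = 0 → n ≠ 0 → n 2 ≠ 0 ∧ n = n 2 • ![0, 0, 1, 2] := by decide
    obtain ⟨h2, hn2⟩ := key n hnW₃ h0 hn0
    have h' := hswap _ (mem_of_smul_mem h2 (hn2 ▸ hn))
    rwa [show (![0, 0, 1, 2] : V) ∘ blockSwap = ![1, 2, 0, 0] by decide] at h'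
  · have key : ∀ n ∈ W₃, n - n ∘ swap 0 1 = (-n 0) • ![1, 2, 0, 0] := by decide
    exact mem_of_smul_mem (neg_ne_zero.2 h0)
      (key n hnW₃ ▸ sub_mem hn (hW _ swap_mem_D n hn))

lemma W₁_le_or_W₂_le_of_mem (hW : IsInvariant W) {m : V} (hm : m ∈ W) (hm0 : m ≠ 0)
    (hmp : m ∘ partner = m) : W₁ ≤ W ∨ W₂ ≤ W := by
  have hsum : ∀ m : V, m ∘ partner = m → m + m ∘ blockSwap = (m 0 + m 2) • ![1, 1, 1, 1] := by
    decide
  have hdiff : ∀ m : V, m ∘ partner = m → m - m ∘ blockSwap = (m 0 - m 2) • ![1, 1, 2, 2] := by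
    decide
  have hcases : ∀ m : V, m ∘ partner = m → m ≠ 0 → m 0 + m 2 ≠ 0 ∨ m 0 - m 2 ≠ 0 := by decide
  have hmσ := hW _ blockSwap_mem_D m hm
  rcases hcases m hmp hm0 with h | h
  · left
    rw [W₁_eq_closure, AddSubgroup.closure_le, Set.singleton_subset_iff]
    exact mem_of_smul_mem h (hsum m hmp ▸ add_mem hm hmσ)
  · right
    rw [W₂_eq_closure, AddSubgroup.closure_le, Set.singleton_subset_iff]
    exact mem_of_smul_mem h (hdiff m hmp ▸ sub_mem hm hmσ)

lemma exists_le_of_ne_zero_mem (hW : IsInvariant W) {n : V} (hn : n ∈ W) (hn0 : n ≠ 0) :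
    W₁ ≤ W ∨ W₂ ≤ W ∨ W₃ ≤ W := by
  by_cases hnW₃ : n ∈ W₃
  · exact Or.inr (Or.inr (W₃_le_of_mem hW hn hn0 hnW₃))
  have key : ∀ n : V, n ∉ W₃ →
      n + n ∘ partner ≠ 0 ∧ (n + n ∘ partner) ∘ partner = n + n ∘ partner := by
    decide
  obtain ⟨hm0, hmp⟩ := key n hnW₃
  exact (W₁_le_or_W₂_le_of_mem hW (add_mem hn (hW _ partner_mem_D n hn)) hm0 hmp).imp_right
    Or.inl

end InvariantSubgroup

lemma isNormalIn_M₁ : IsNormalIn M₁ G :=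
  M₁_eq ▸ isNormalIn_translations isInvariant_W₁

lemma isNormalIn_M₂ : IsNormalIn M₂ G :=
  M₂_eq ▸ isNormalIn_translations isInvariant_W₂

lemma isNormalIn_M₃ : IsNormalIn M₃ G :=
  M₃_eq ▸ isNormalIn_translations isInvariant_W₃

lemma not_M₁_le : ¬ M₁ ≤ M₂ ∧ ¬ M₁ ≤ M₃ := by
  have h : Equiv.addLeft (![1, 1, 1, 1] : V) ∈ M₁ ∧ Equiv.addLeft (![1, 1, 1, 1] : V) ∉ M₂ ∧
      Equiv.addLeft (![1, 1, 1, 1] : V) ∉ M₃ := by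
    simp only [M₁_eq, M₂_eq, M₃_eq, addLeft_mem_translations]
    decide
  exact ⟨fun hle => h.2.1 (hle h.1), fun hle => h.2.2 (hle h.1)⟩

lemma not_M₂_le : ¬ M₂ ≤ M₁ ∧ ¬ M₂ ≤ M₃ := by
  have h : Equiv.addLeft (![1, 1, 2, 2] : V) ∈ M₂ ∧ Equiv.addLeft (![1, 1, 2, 2] : V) ∉ M₁ ∧
      Equiv.addLeft (![1, 1, 2, 2] : V) ∉ M₃ := by
    simp only [M₁_eq, M₂_eq, M₃_eq, addLeft_mem_translations]
    decide
  exact ⟨fun hle => h.2.1 (hle h.1), fun hle => h.2.2 (hle h.1)⟩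

lemma not_M₃_le : ¬ M₃ ≤ M₁ ∧ ¬ M₃ ≤ M₂ := by
  have h : Equiv.addLeft (![1, 2, 0, 0] : V) ∈ M₃ ∧ Equiv.addLeft (![1, 2, 0, 0] : V) ∉ M₁ ∧
      Equiv.addLeft (![1, 2, 0, 0] : V) ∉ M₂ := by
    simp only [M₁_eq, M₂_eq, M₃_eq, addLeft_mem_translations]
    decide
  exact ⟨fun hle => h.2.1 (hle h.1), fun hle => h.2.2 (hle h.1)⟩

lemma isNormalIn_and_ne_bot_of_mem {N : Subgroup (Perm V)} (hN : N ∈ ({M₁, M₂, M₃} : Set _)) :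
    IsNormalIn N G ∧ N ≠ ⊥ := by
  rcases hN with rfl | rfl | rfl
  · exact ⟨isNormalIn_M₁, fun h => not_M₁_le.1 (h ▸ bot_le)⟩
  · exact ⟨isNormalIn_M₂, fun h => not_M₂_le.1 (h ▸ bot_le)⟩
  · exact ⟨isNormalIn_M₃, fun h => not_M₃_le.1 (h ▸ bot_le)⟩

lemma eq_of_le_of_mem {N N' : Subgroup (Perm V)} (hN : N ∈ ({M₁, M₂, M₃} : Set _))
    (hN' : N' ∈ ({M₁, M₂, M₃} : Set _)) (h : N' ≤ N) : N' = N := by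
  have := not_M₁_le; have := not_M₂_le; have := not_M₃_le
  rcases hN with rfl | rfl | rfl <;> rcases hN' with rfl | rfl | rfl <;> tauto

lemma exists_M_le {K : Subgroup (Perm V)} (hK : IsNormalIn K G) (hK0 : K ≠ ⊥) :
    ∃ N ∈ ({M₁, M₂, M₃} : Set _), N ≤ K := by
  obtain ⟨n, hn, hn0⟩ := exists_ne_zero_mem_translationVectors hK hK0
  simp only [Set.mem_insert_iff, Set.mem_singleton_iff, exists_eq_or_imp, exists_eq_left,
    M₁_eq, M₂_eq, M₃_eq, translations_le_iff]
  exact exists_le_of_ne_zero_mem (isInvariant_translationVectors hK) hn hn0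

lemma not_isTransitivePerm_M₁ : ¬ IsTransitivePerm M₁ := by
  intro h
  obtain ⟨g, hg, hg0⟩ := h 0 ![1, 0, 0, 0]
  rw [M₁_eq] at hg
  obtain ⟨w, hw, rfl⟩ := hg
  simp only [coe_addLeft, add_zero] at hg0
  exact absurd (hg0 ▸ SetLike.mem_coe.1 hw) (by decide)

def fibre (i : Fin 4) (γ : Fin 3) : Set V := {v | v i = γ}

def fibreBlock (i : Fin 4) (γ : Fin 3) : coordPart i := ⟨fibre i γ, γ, rfl⟩

lemma fibreBlock_surjective (i : Fin 4) : Function.Surjective (fibreBlock i) :=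
  fun b => ⟨b.2.choose, Subtype.ext b.2.choose_spec.symm⟩

lemma smul_fibre (n : V) (σ : Perm (Fin 4)) (i : Fin 4) (γ : Fin 3) :
    (Equiv.addLeft n * coordPerm σ) • fibre i γ = fibre (σ i) (n (σ i) + γ) := by
  ext w
  rw [Set.mem_smul_set_iff_inv_smul_mem]
  simp only [fibre, coordPerm, mul_inv_rev, neg_addLeft, Perm.smul_def, Perm.coe_mul,
    Perm.coe_inv, arrowCongr_symm, refl_symm, coe_addLeft, Function.comp_apply, Set.mem_ofPred_eq,
    arrowCongr_apply, coe_refl, symm_symm, Pi.add_apply, Pi.neg_apply, id_eq]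
  exact neg_add_eq_iff_eq_add

lemma addLeft_smul_coordPart (n : V) (i : Fin 4) :
    Equiv.addLeft n • coordPart i = coordPart i := by
  have h γ : Equiv.addLeft n • fibre i γ = fibre i (n i + γ) := by
    simpa using smul_fibre n 1 i γ
  ext B
  constructor
  · rintro ⟨_, ⟨γ, rfl⟩, rfl⟩
    exact ⟨_, h γ⟩
  · rintro ⟨δ, rfl⟩
    exact ⟨fibre i (-n i + δ), ⟨_, rfl⟩, show _ • _ = _ by rw [h, add_neg_cancel_left]; rfl⟩

lemma eq_of_fibre_eq {i j : Fin 4} {γ δ : Fin 3} (h : fibre j γ = fibre i δ) : j = i := by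
  by_contra hji
  have hv : Function.update (fun _ => γ) i (δ + 1) ∈ fibre j γ := by
    simp [fibre, hji]
  rw [h] at hv
  simp [fibre] at hv

lemma apply_eq_of_smul_coordPart_eq {n : V} {σ : Perm (Fin 4)} {i : Fin 4}
    (h : (Equiv.addLeft n * coordPerm σ) • coordPart i = coordPart i) : σ i = i := by
  have hmem : (Equiv.addLeft n * coordPerm σ) • fibre i 0 ∈ coordPart i :=
    h ▸ Set.smul_mem_smul_set ⟨0, rfl⟩
  obtain ⟨δ, hδ⟩ := hmem
  rw [smul_fibre] at hδ
  exact eq_of_fibre_eq hδ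

lemma exists_apply_fibreBlock {i : Fin 4} {x : Perm (coordPart i)}
    (hx : x ∈ component G (coordPart i)) :
    ∃ k, ∀ γ, x (fibreBlock i γ) = fibreBlock i (k + γ) := by
  obtain ⟨g, hg, rfl⟩ := Subgroup.mem_map.1 hx
  obtain ⟨n, σ, -, hgv⟩ := mem_G_iff.1 (Subgroup.mem_subgroupOf.1 hg)
  have hσ : σ i = i := apply_eq_of_smul_coordPart_eq (hgv ▸ g.2)
  refine ⟨n i, fun γ => Subtype.ext ?_⟩
  change (g : Perm V) • fibre i γ = fibre i (n i + γ)
  rw [hgv, smul_fibre, hσ]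

lemma exists_mem_component_shift (i : Fin 4) (k : Fin 3) :
    ∃ x ∈ component G (coordPart i), ∀ γ, x (fibreBlock i γ) = fibreBlock i (k + γ) := by
  let g : partStab (coordPart i) :=
    ⟨Equiv.addLeft (fun _ => k), addLeft_smul_coordPart (fun _ => k) i⟩
  refine ⟨componentHom (coordPart i) g,
    Subgroup.mem_map_of_mem _ (Subgroup.mem_subgroupOf.2 (addLeft_mem_G _)), fun γ => ?_⟩
  apply Subtype.ext
  change Equiv.addLeft (fun _ => k) • fibre i γ = fibre i (k + γ)
  simpa using smul_fibre (fun _ => k) 1 i γ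

lemma isQuasiprimitivePerm_component (i : Fin 4) :
    IsQuasiprimitivePerm (component G (coordPart i)) := by
  refine ⟨?_, fun N hN hN0 => ?_⟩
  · obtain ⟨x, hx, hxf⟩ := exists_mem_component_shift i 1
    exact isTransitivePerm_of_shift (fibreBlock_surjective i) hx one_ne_zero hxf
  · obtain ⟨x, hxN, hx1⟩ := N.bot_or_exists_ne_one.resolve_left hN0
    obtain ⟨k, hk⟩ := exists_apply_fibreBlock (hN.1 hxN)
    have hk0 : k ≠ 0 := by
      rintro rfl
      refine hx1 (Equiv.ext fun b => ?_)
      obtain ⟨γ, rfl⟩ := fibreBlock_surjective i b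
      simpa using hk γ
    exact isTransitivePerm_of_shift (fibreBlock_surjective i) hxN hk0 hk

end Ex14

/-- With H = ⟨(1 2 3)⟩ and G = H wr D₈ in product action on {1,2,3}⁴,
the group G has exactly the three minimal normal subgroups
M₁ = {(x,x,x,x)}, M₂ = {(x,x,x²,x²)}, M₃ = {(x,x²,y,y²)}; in particular G is not
quasiprimitive, even though each component of G (on the natural coordinate
partitions) is quasiprimitive. -/
theorem wreath_D8_three_minimal_normal_subgroups :
    QP.IsMinimalNormalIn Ex14.M₁ Ex14.G ∧
    QP.IsMinimalNormalIn Ex14.M₂ Ex14.G ∧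
    QP.IsMinimalNormalIn Ex14.M₃ Ex14.G ∧
    Ex14.M₁ ≠ Ex14.M₂ ∧ Ex14.M₁ ≠ Ex14.M₃ ∧ Ex14.M₂ ≠ Ex14.M₃ ∧
    (∀ K : Subgroup (Equiv.Perm (Fin 4 → Fin 3)),
      QP.IsMinimalNormalIn K Ex14.G → K = Ex14.M₁ ∨ K = Ex14.M₂ ∨ K = Ex14.M₃) ∧
    ¬ QP.IsQuasiprimitivePerm Ex14.G ∧
    (∀ i : Fin 4, QP.IsQuasiprimitivePerm (QP.component Ex14.G (Ex14.coordPart i))) := by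
  have hcover := fun K => @Ex14.exists_M_le K
  have hmin : ∀ N ∈ ({Ex14.M₁, Ex14.M₂, Ex14.M₃} : Set _), QP.IsMinimalNormalIn N Ex14.G :=
    fun N hN => QP.isMinimalNormalIn_of_forall_exists_le hcover
      (fun _ hN _ hN' => Ex14.eq_of_le_of_mem hN hN') hN
      (Ex14.isNormalIn_and_ne_bot_of_mem hN).1 (Ex14.isNormalIn_and_ne_bot_of_mem hN).2
  refine ⟨hmin _ (by simp), hmin _ (by simp), hmin _ (by simp),
    fun h => Ex14.not_M₁_le.1 h.le, fun h => Ex14.not_M₁_le.2 h.le,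
    fun h => Ex14.not_M₂_le.2 h.le, fun K hK => ?_, fun hG => ?_,
    Ex14.isQuasiprimitivePerm_component⟩
  · simpa using QP.mem_of_isMinimalNormalIn hcover
      (fun _ => Ex14.isNormalIn_and_ne_bot_of_mem) hK
  · exact Ex14.not_isTransitivePerm_M₁ (hG.2 _ (hmin _ (by simp)).1 (hmin _ (by simp)).2.1)
end
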